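/- arXiv:1604.03716 — 5 statements merged into one kernel-verified Lean document; each statement's English description precedes it below -/
import Mathlib

section
/- Let G be a minimal (3, 3)-Ramsey graph. Then for every vertex v of G, the independence number of the subgraph of G induced by the neighborhood of v satisfies α(G(v)) ≤ d(v) − 3, where d(v) is the degree of v. -/
open SimpleGraph

/-- A monochromatic `n`-clique of color `col` in the 2-coloring `c` of the edges of `G`. -/
def IsMonoNClique {V : Type} (G : SimpleGraph V) (c : Sym2 V → Bool) (col : Bool)
    (n : ℕ) (t : Finset V) : Prop :=
  G.IsNClique n t ∧ ∀ u ∈ t, ∀ v ∈ t, u ≠ v → c s(u, v) = col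

/-- A 2-coloring of the edges of `G` is `(p, q)`-free if it contains no `p`-clique of the
first color and no `q`-clique of the second color. -/
def IsFree {V : Type} (G : SimpleGraph V) (p q : ℕ) (c : Sym2 V → Bool) : Prop :=
  (¬ ∃ t : Finset V, IsMonoNClique G c true p t) ∧
  (¬ ∃ t : Finset V, IsMonoNClique G c false q t)

/-- `G → (p, q)`: every 2-coloring of the edges of `G` contains a `p`-clique of the first
color or a `q`-clique of the second color. -/
def Arrows {V : Type} (G : SimpleGraph V) (p q : ℕ) : Prop :=
  ∀ c : Sym2 V → Bool, ¬ IsFree G p q c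

/-- `G` is a minimal `(p, q)`-Ramsey graph: `G → (p, q)` and `H ↛ (p, q)` for every
proper subgraph `H` of `G` (on a vertex subset `s`, with edge set contained in that of `G`). -/
def MinimalArrows {V : Type} (G : SimpleGraph V) (p q : ℕ) : Prop :=
  Arrows G p q ∧
    ∀ (s : Set V) (H : SimpleGraph ↥s), H ≤ G.induce s →
      (s ≠ Set.univ ∨ H ≠ G.induce s) → ¬ Arrows H p q

/-- The degree of a vertex. -/
noncomputable def deg {V : Type} (G : SimpleGraph V) (v : V) : ℕ :=
  (G.neighborSet v).ncard

/-- Minimum degree. -/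
noncomputable def minDeg {V : Type} (G : SimpleGraph V) : ℕ :=
  sInf (Set.range (deg G))

/-- Maximum degree. -/
noncomputable def maxDeg {V : Type} (G : SimpleGraph V) : ℕ :=
  sSup (Set.range (deg G))

/-- Independence number: the clique number of the complement. -/
noncomputable def indepNum {V : Type} (G : SimpleGraph V) : ℕ :=
  Gᶜ.cliqueNum

/-- The graph obtained from `H` by adding one new vertex whose neighborhood is `M`. -/
def addVertex {W : Type} (H : SimpleGraph W) (M : Set W) : SimpleGraph (Option W) where
  Adj x y :=
    match x, y with
    | some a, some b => H.Adj a b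
    | some a, none => a ∈ M
    | none, some b => b ∈ M
    | none, none => False
  symm := by
    constructor
    rintro (_ | a) (_ | b) h
    · exact h.elim
    · exact h
    · exact h
    · exact h.symm
  loopless := by
    constructor
    rintro (_ | a) h
    · exact h.elim
    · exact H.irrefl h

/-- `c'` extends the 2-coloring `c` to the graph with one added vertex. -/
def ExtendsTo {W : Type} (c : Sym2 W → Bool) (c' : Sym2 (Option W) → Bool) : Prop :=
  ∀ e : Sym2 W, c' (e.map some) = c e

/-- `M` is a marked vertex set in `H`: some `(3,3)`-free 2-coloring of the edges of `H`
cannot be extended to a `(3,3)`-free 2-coloring of the edges of `H` plus a new vertex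
whose neighborhood is `M`. -/
def IsMarked {W : Type} (H : SimpleGraph W) (M : Set W) : Prop :=
  ∃ c : Sym2 W → Bool, IsFree H 3 3 c ∧
    ∀ c' : Sym2 (Option W) → Bool, ExtendsTo c c' → ¬ IsFree (addVertex H M) 3 3 c'

/-- A complete family of marked vertex sets in `H`. -/
def IsCompleteFamily {W ι : Type} (H : SimpleGraph W) (M : ι → Set W) : Prop :=
  (∀ i, IsMarked H (M i)) ∧
  ∀ c : Sym2 W → Bool, IsFree H 3 3 c →
    ∃ i, ∀ c' : Sym2 (Option W) → Bool, ExtendsTo c c' → ¬ IsFree (addVertex H (M i)) 3 3 c'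

/-- The `K_3`-multiplicity of `G`: the minimum number of monochromatic triangles over
all 2-colorings of the edges of `G`. -/
noncomputable def K3Multiplicity {V : Type} (G : SimpleGraph V) : ℕ :=
  sInf {m | ∃ c : Sym2 V → Bool,
    {t : Finset V | ∃ col, IsMonoNClique G c col 3 t}.ncard = m}


section Aux

variable {V : Type} [Fintype V]

/-- Extend a free coloring of `G - v` to a free coloring of `G`, given an independent
set `A ⊆ N(v)` and a color `col` avoided by all `B`-edges, where `B = N(v) \ A`. -/
lemma extend_free (G : SimpleGraph V) (v : V) (A : Set V)
    (hA : A ⊆ G.neighborSet v)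
    (hInd : ∀ x ∈ A, ∀ y ∈ A, x ≠ y → ¬ G.Adj x y)
    (c : Sym2 ↥({v}ᶜ : Set V) → Bool)
    (hc : IsFree (G.induce ({v}ᶜ : Set V)) 3 3 c)
    (col : Bool)
    (hcol : ∀ x y : ↥({v}ᶜ : Set V), (x : V) ∈ G.neighborSet v \ A →
      (y : V) ∈ G.neighborSet v \ A → G.Adj (x : V) (y : V) → c s(x, y) ≠ col) :
    ∃ c' : Sym2 V → Bool, IsFree G 3 3 c' := by
  classical
  set g : V → Bool := fun x => if x ∈ A then !col else col with hg
  set f : V → V → Bool := fun x y =>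
    if hx : x = v then g y else if hy : y = v then g x
      else c s(⟨x, hx⟩, ⟨y, hy⟩) with hfdef
  have hf : ∀ x y, f x y = f y x := by
    intro x y
    by_cases hx : x = v <;> by_cases hy : y = v <;>
      simp only [f, hx, hy, dif_pos, dif_neg, not_false_iff]
    rw [Sym2.eq_swap]
  set c' : Sym2 V → Bool := Sym2.lift ⟨fun x y => f x y, hf⟩ with hc'
  have hvx : ∀ x, c' s(v, x) = g x := by
    intro x
    simp [c', f]
  have hee : ∀ x y (hx : ¬ x = v) (hy : ¬ y = v),
      c' s(x, y) = c s(⟨x, hx⟩, ⟨y, hy⟩) := by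
    intro x y hx hy
    simp only [c', Sym2.lift_mk, f, dif_neg hx, dif_neg hy]
  have main : ∀ (colr : Bool) (t : Finset V), ¬ IsMonoNClique G c' colr 3 t := by
    rintro colr t ⟨hcl, hmono⟩
    by_cases hvt : v ∈ t
    · -- triangle through v
      have hcard : (t.erase v).card = 2 := by
        rw [Finset.card_erase_of_mem hvt, hcl.2]
      obtain ⟨x, y, hxy, hset⟩ := Finset.card_eq_two.mp hcard
      have hxt : x ∈ t := Finset.mem_of_mem_erase (hset ▸ Finset.mem_insert_self x {y})
      have hyt : y ∈ t := Finset.mem_of_mem_erase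
        (hset ▸ Finset.mem_insert_of_mem (Finset.mem_singleton_self y))
      have hxv : x ≠ v := Finset.ne_of_mem_erase (hset ▸ Finset.mem_insert_self x {y})
      have hyv : y ≠ v := Finset.ne_of_mem_erase
        (hset ▸ Finset.mem_insert_of_mem (Finset.mem_singleton_self y))
      have hadjvx : G.Adj v x := hcl.1 hvt hxt (Ne.symm hxv)
      have hadjvy : G.Adj v y := hcl.1 hvt hyt (Ne.symm hyv)
      have hadjxy : G.Adj x y := hcl.1 hxt hyt hxy
      have hgx : g x = colr := by rw [← hvx x]; exact hmono v hvt x hxt (Ne.symm hxv)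
      have hgy : g y = colr := by rw [← hvx y]; exact hmono v hvt y hyt (Ne.symm hyv)
      have hcxy : c' s(x, y) = colr := hmono x hxt y hyt hxy
      have hxN : x ∈ G.neighborSet v := hadjvx
      have hyN : y ∈ G.neighborSet v := hadjvy
      by_cases hxA : x ∈ A <;> by_cases hyA : y ∈ A
      · exact hInd x hxA y hyA hxy hadjxy
      · rw [hg] at hgx hgy
        simp only [if_pos hxA, if_neg hyA] at hgx hgy
        rw [← hgy] at hgx
        simp at hgx
      · rw [hg] at hgx hgy
        simp only [if_neg hxA, if_pos hyA] at hgx hgy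
        rw [← hgy] at hgx
        simp at hgx
      · have hgx' : col = colr := by rw [hg] at hgx; simpa [hxA] using hgx
        have := hcol ⟨x, hxv⟩ ⟨y, hyv⟩ ⟨hxN, hxA⟩ ⟨hyN, hyA⟩ hadjxy
        rw [← hee x y hxv hyv] at this
        exact this (hcxy.trans hgx'.symm)
    · -- triangle avoiding v
      have hne : ∀ a ∈ t, ¬ a = v := fun a ha h => hvt (h ▸ ha)
      set emb : {a // a ∈ t} → ↥({v}ᶜ : Set V) :=
        fun a => ⟨a.1, hne a.1 a.2⟩ with hemb
      have hinj : Function.Injective emb := by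
        intro a b h
        simp only [emb, Subtype.mk.injEq] at h
        have h' : (a : V) = (b : V) := congrArg (fun z : ↥({v}ᶜ : Set V) => (z : V)) h
        exact Subtype.ext h'
      set t' : Finset ↥({v}ᶜ : Set V) := t.attach.map ⟨emb, hinj⟩ with ht'
      have hmem : ∀ z : ↥({v}ᶜ : Set V), z ∈ t' → (z : V) ∈ t := by
        intro z hz
        simp only [t', Finset.mem_map, Finset.mem_attach, true_and] at hz
        obtain ⟨a, ha⟩ := hz
        rw [← ha]
        exact a.2
      have hclique : (G.induce ({v}ᶜ : Set V)).IsNClique 3 t' := by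
        constructor
        · intro a ha b hb hab
          have : G.Adj (a : V) (b : V) :=
            hcl.1 (hmem a ha) (hmem b hb) (fun h => hab (Subtype.ext h))
          exact this
        · rw [ht', Finset.card_map, Finset.card_attach, hcl.2]
      have hmono' : ∀ u ∈ t', ∀ w ∈ t', u ≠ w → c s(u, w) = colr := by
        intro u hu w hw huw
        have := hmono u (hmem u hu) w (hmem w hw) (fun h => huw (Subtype.ext h))
        rwa [hee (u : V) (w : V) u.2 w.2, Subtype.coe_eta, Subtype.coe_eta] at this
      cases colr
      · exact hc.2 ⟨t', hclique, hmono'⟩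
      · exact hc.1 ⟨t', hclique, hmono'⟩
  exact ⟨c', fun ⟨t, h⟩ => main true t h, fun ⟨t, h⟩ => main false t h⟩

lemma big_complement (G : SimpleGraph V) (hmin : MinimalArrows G 3 3) (v : V)
    (A : Set V) (hA : A ⊆ G.neighborSet v)
    (hInd : ∀ x ∈ A, ∀ y ∈ A, x ≠ y → ¬ G.Adj x y) :
    3 ≤ (G.neighborSet v \ A).ncard := by
  classical
  by_contra hB
  push_neg at hB
  have hB2 : (G.neighborSet v \ A).ncard ≤ 2 := by omega
  have hvs : v ∉ ({v}ᶜ : Set V) := fun h => h rfl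
  have hne : ({v}ᶜ : Set V) ≠ Set.univ := fun h => hvs (h ▸ Set.mem_univ v)
  have hnarr := hmin.2 ({v}ᶜ : Set V) (G.induce ({v}ᶜ : Set V)) le_rfl (Or.inl hne)
  rw [Arrows] at hnarr
  push_neg at hnarr
  obtain ⟨c, hc⟩ := hnarr
  -- choose a color avoided by edges inside B
  have key : ∃ col : Bool, ∀ x y : ↥({v}ᶜ : Set V), (x : V) ∈ G.neighborSet v \ A →
      (y : V) ∈ G.neighborSet v \ A → G.Adj (x : V) (y : V) → c s(x, y) ≠ col := by
    by_cases hEdge : ∃ x y : ↥({v}ᶜ : Set V), (x : V) ∈ G.neighborSet v \ A ∧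
        (y : V) ∈ G.neighborSet v \ A ∧ G.Adj (x : V) (y : V)
    · obtain ⟨b1, b2, hb1, hb2, hadj⟩ := hEdge
      refine ⟨!c s(b1, b2), ?_⟩
      intro x y hx hy hxy
      have hbB : ({(b1 : V), (b2 : V)} : Set V) ⊆ G.neighborSet v \ A := by
        intro z hz
        rcases hz with h | h
        · exact h ▸ hb1
        · exact h ▸ hb2
      have hb12 : (b1 : V) ≠ (b2 : V) := hadj.ne
      have hcard2 : ({(b1 : V), (b2 : V)} : Set V).ncard = 2 :=
        Set.ncard_pair hb12
      have hBeq : ({(b1 : V), (b2 : V)} : Set V) = G.neighborSet v \ A :=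
        Set.eq_of_subset_of_ncard_le hbB (by omega) (Set.toFinite _)
      have hxm : (x : V) ∈ ({(b1 : V), (b2 : V)} : Set V) := hBeq ▸ hx
      have hym : (y : V) ∈ ({(b1 : V), (b2 : V)} : Set V) := hBeq ▸ hy
      have hxyne : (x : V) ≠ (y : V) := hxy.ne
      have heq : s(x, y) = s(b1, b2) := by
        rcases hxm with h1 | h1 <;> rcases hym with h2 | h2
        · exact absurd (h1.trans h2.symm) hxyne
        · rw [Subtype.ext h1, Subtype.ext h2]
        · rw [Subtype.ext h1, Subtype.ext h2, Sym2.eq_swap]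
        · exact absurd (h1.trans h2.symm) hxyne
      rw [heq]
      simp
    · push_neg at hEdge
      exact ⟨true, fun x y hx hy hxy => absurd hxy (hEdge x y hx hy)⟩
  obtain ⟨col, hcol⟩ := key
  obtain ⟨c', hc'⟩ := extend_free G v A hA hInd c hc col hcol
  exact hmin.1 c' hc'

end Aux


/-- If `G` is a minimal `(3, 3)`-Ramsey graph, then for every vertex `v`,
`α(G(v)) ≤ d(v) - 3`, where `G(v)` is the subgraph induced by the neighborhood of `v`. -/
theorem stmt_1 {V : Type} [Fintype V] (G : SimpleGraph V) (hmin : MinimalArrows G 3 3)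
    (v : V) :
    _root_.indepNum (G.induce (G.neighborSet v)) ≤ deg G v - 3 := by
  classical
  haveI : Fintype ↥(G.neighborSet v) := Fintype.ofFinite _
  obtain ⟨t0, ht0⟩ := (G.induce (G.neighborSet v))ᶜ.exists_isNClique_cliqueNum
  set A : Set V := ↑(t0.image (Subtype.val)) with hAdef
  have hA : A ⊆ G.neighborSet v := by
    intro x hx
    simp only [hAdef, Finset.coe_image, Set.mem_image, Finset.mem_coe] at hx
    obtain ⟨a, _, ha⟩ := hx
    exact ha ▸ a.2
  have hInd : ∀ x ∈ A, ∀ y ∈ A, x ≠ y → ¬ G.Adj x y := by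
    intro x hx y hy hxy hadj
    simp only [hAdef, Finset.coe_image, Set.mem_image, Finset.mem_coe] at hx hy
    obtain ⟨a, ha, rfl⟩ := hx
    obtain ⟨b, hb, rfl⟩ := hy
    have hab : a ≠ b := fun h => hxy (congrArg Subtype.val h)
    have := ht0.1 ha hb hab
    rw [compl_adj] at this
    exact this.2 hadj
  have hAcard : A.ncard = _root_.indepNum (G.induce (G.neighborSet v)) := by
    rw [hAdef, Set.ncard_coe_finset,
      Finset.card_image_of_injective _ Subtype.val_injective, ht0.2]
    rfl
  have hkey := big_complement G hmin v A hA hInd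
  have hsplit : (G.neighborSet v \ A).ncard + A.ncard = (G.neighborSet v).ncard :=
    Set.ncard_diff_add_ncard_of_subset hA (Set.toFinite _)
  have hdeg : deg G v = (G.neighborSet v).ncard := rfl
  omega
end

section
/- Let v_1, ..., v_s be pairwise non-adjacent (independent) vertices of a graph G and let H = G − {v_1, ..., v_s}. If {N_G(v_1), ..., N_G(v_s)} is a complete family of marked vertex sets in H, then G → (3, 3). -/
open SimpleGraph

/-- Pushing a monochromatic clique forward along an injective adjacency-preserving map. -/
lemma push_mono {V W : Type} [DecidableEq W] {G : SimpleGraph V} {G' : SimpleGraph W} (f : V → W)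
    (hinj : Function.Injective f) (hadj : ∀ a b, G.Adj a b → G'.Adj (f a) (f b))
    (c' : Sym2 W → Bool) (col : Bool) (n : ℕ) (t : Finset V)
    (h : IsMonoNClique G (fun e => c' (e.map f)) col n t) :
    IsMonoNClique G' c' col n (t.image f) := by
  obtain ⟨⟨hclique, hcard⟩, hcol⟩ := h
  refine ⟨⟨?_, ?_⟩, ?_⟩
  · rintro x hx y hy hne
    simp only [Finset.coe_image, Set.mem_image, Finset.mem_coe] at hx hy
    obtain ⟨a, ha, rfl⟩ := hx
    obtain ⟨b, hb, rfl⟩ := hy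
    exact hadj a b (hclique ha hb (fun hab => hne (by rw [hab])))
  · rw [Finset.card_image_of_injective _ hinj, hcard]
  · intro u hu v hv huv
    obtain ⟨a, ha, rfl⟩ := Finset.mem_image.mp hu
    obtain ⟨b, hb, rfl⟩ := Finset.mem_image.mp hv
    have hab : a ≠ b := fun hab => huv (by rw [hab])
    have := hcol a ha b hb hab
    simpa using this

theorem not_free_iff {V : Type} (G : SimpleGraph V) (p q : ℕ) (c : Sym2 V → Bool) :
    ¬ IsFree G p q c ↔ (∃ t : Finset V, IsMonoNClique G c true p t) ∨
      (∃ t : Finset V, IsMonoNClique G c false q t) := by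
  rw [IsFree, not_and_or, not_not, not_not]

/-- If `A` is a set of pairwise non-adjacent vertices of `G`, `H = G - A`, and the family
of neighborhoods `{N_G(v) : v ∈ A}` is a complete family of marked vertex sets in `H`,
then `G → (3, 3)`. -/
theorem stmt_4 {V : Type} [Fintype V] (G : SimpleGraph V)
    (A : Set V) (hA : ∀ u ∈ A, ∀ w ∈ A, ¬ G.Adj u w)
    (hcf : IsCompleteFamily (G.induce Aᶜ) (fun v : A => {w : ↥Aᶜ | G.Adj v.1 w.1})) :
    Arrows G 3 3 := by
  classical
  intro c hfree
  set H := G.induce Aᶜ with hHdef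
  set cH : Sym2 ↥Aᶜ → Bool := fun e => c (e.map Subtype.val) with hcHdef
  have hvalinj : Function.Injective (Subtype.val : ↥Aᶜ → V) := Subtype.val_injective
  have hvaladj : ∀ a b : ↥Aᶜ, H.Adj a b → G.Adj a.1 b.1 := fun a b h => h
  by_cases hH : IsFree H 3 3 cH
  · obtain ⟨v, hv⟩ := hcf.2 cH hH
    set f : Option ↥Aᶜ → V := fun o => o.elim v.1 Subtype.val with hfdef
    set c' : Sym2 (Option ↥Aᶜ) → Bool := fun e => c (e.map f) with hc'def
    have hext : ExtendsTo cH c' := by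
      intro e
      simp only [hc'def, Sym2.map_map]
      rfl
    have hinj : Function.Injective f := by
      rintro (_ | a) (_ | b) hab
      · rfl
      · exact absurd (show (b:V) = v.1 from hab.symm) (fun h => b.2 (h ▸ v.2))
      · exact absurd (show (a:V) = v.1 from hab) (fun h => a.2 (h ▸ v.2))
      · exact congrArg some (hvalinj hab)
    have hadj : ∀ a b, (addVertex H {w : ↥Aᶜ | G.Adj v.1 w.1}).Adj a b →
        G.Adj (f a) (f b) := by
      rintro (_ | a) (_ | b) hab
      · exact hab.elim
      · exact (show G.Adj v.1 b.1 from hab)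
      · exact (show G.Adj v.1 a.1 from hab).symm
      · exact hvaladj a b hab
    have := hv c' hext
    rw [not_free_iff] at this
    rcases this with ⟨t, ht⟩ | ⟨t, ht⟩
    · exact hfree.1 ⟨t.image f, push_mono f hinj hadj c true 3 t ht⟩
    · exact hfree.2 ⟨t.image f, push_mono f hinj hadj c false 3 t ht⟩
  · rw [not_free_iff] at hH
    rcases hH with ⟨t, ht⟩ | ⟨t, ht⟩
    · exact hfree.1 ⟨t.image _, push_mono Subtype.val hvalinj hvaladj c true 3 t ht⟩
    · exact hfree.2 ⟨t.image _, push_mono Subtype.val hvalinj hvaladj c false 3 t ht⟩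
end

section
/- Let G be a minimal (3, 3)-Ramsey graph, let v_1, ..., v_s be pairwise non-adjacent (independent) vertices of G, and let H = G − {v_1, ..., v_s}. Then {N_G(v_1), ..., N_G(v_s)} is a complete family of marked vertex sets in H, and moreover this family is minimal in the sense that no proper subfamily of it is a complete family of marked vertex sets in H. -/
open SimpleGraph

lemma mono3_iff {V : Type} (G : SimpleGraph V) (c : Sym2 V → Bool) (col : Bool) :
    (∃ t : Finset V, IsMonoNClique G c col 3 t) ↔
    ∃ a b d : V, G.Adj a b ∧ G.Adj a d ∧ G.Adj b d ∧
      c s(a, b) = col ∧ c s(a, d) = col ∧ c s(b, d) = col := by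
  classical
  constructor
  · rintro ⟨t, ⟨hclique, hcard⟩, hcol⟩
    obtain ⟨a, b, d, h1, h2, h3, rfl⟩ := Finset.card_eq_three.mp hcard
    have ma : a ∈ (↑({a, b, d} : Finset V) : Set V) := by simp
    have mb : b ∈ (↑({a, b, d} : Finset V) : Set V) := by simp
    have md : d ∈ (↑({a, b, d} : Finset V) : Set V) := by simp
    have ma' : a ∈ ({a, b, d} : Finset V) := by simp
    have mb' : b ∈ ({a, b, d} : Finset V) := by simp
    have md' : d ∈ ({a, b, d} : Finset V) := by simp
    exact ⟨a, b, d, hclique ma mb h1, hclique ma md h2, hclique mb md h3,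
      hcol a ma' b mb' h1, hcol a ma' d md' h2, hcol b mb' d md' h3⟩
  · rintro ⟨a, b, d, hab, had, hbd, h1, h2, h3⟩
    refine ⟨{a, b, d}, ⟨?_, Finset.card_eq_three.mpr ⟨a, b, d, hab.ne, had.ne, hbd.ne, rfl⟩⟩, ?_⟩
    · intro x hx y hy hxy
      simp only [Finset.coe_insert, Set.mem_insert_iff, Finset.coe_singleton,
        Set.mem_singleton_iff] at hx hy
      rcases hx with rfl | rfl | rfl <;> rcases hy with rfl | rfl | rfl <;>
        first
          | exact absurd rfl hxy
          | assumption
          | exact hab.symm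
          | exact had.symm
          | exact hbd.symm
    · have hsw : ∀ u w : V, c s(u, w) = c s(w, u) := fun u w => by rw [Sym2.eq_swap]
      intro x hx y hy hxy
      simp only [Finset.mem_insert, Finset.mem_singleton] at hx hy
      rcases hx with rfl | rfl | rfl <;> rcases hy with rfl | rfl | rfl <;>
        first
          | exact absurd rfl hxy
          | assumption
          | (rw [hsw]; assumption)

lemma isFree_iff_triples {V : Type} (G : SimpleGraph V) (c : Sym2 V → Bool) :
    IsFree G 3 3 c ↔ ∀ a b d : V, G.Adj a b → G.Adj a d → G.Adj b d →
      ¬ (c s(a, b) = c s(a, d) ∧ c s(a, d) = c s(b, d)) := by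
  constructor
  · rintro ⟨h1, h2⟩ a b d hab had hbd ⟨e1, e2⟩
    cases hcol : c s(a, b) with
    | true => exact h1 ((mono3_iff G c true).mpr ⟨a, b, d, hab, had, hbd, hcol,
        e1 ▸ hcol, (e1.trans e2) ▸ hcol⟩)
    | false => exact h2 ((mono3_iff G c false).mpr ⟨a, b, d, hab, had, hbd, hcol,
        e1 ▸ hcol, (e1.trans e2) ▸ hcol⟩)
  · intro h
    constructor <;>
      · rintro ⟨t, ht⟩
        obtain ⟨a, b, d, hab, had, hbd, h1, h2, h3⟩ := (mono3_iff G c _).mp ⟨t, ht⟩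
        exact h a b d hab had hbd ⟨h1.trans h2.symm, h2.trans h3.symm⟩

lemma isFree_pull {α β : Type} (Gα : SimpleGraph α) (Gβ : SimpleGraph β) (f : α → β)
    (hadj : ∀ x y, Gα.Adj x y → Gβ.Adj (f x) (f y))
    (cβ : Sym2 β → Bool) (hfree : IsFree Gβ 3 3 cβ) :
    IsFree Gα 3 3 (fun e => cβ (e.map f)) := by
  rw [isFree_iff_triples] at hfree ⊢
  intro a b d hab had hbd h
  simp only [Sym2.map_pair_eq] at h
  exact hfree _ _ _ (hadj _ _ hab) (hadj _ _ had) (hadj _ _ hbd) h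

lemma exists_free_del {V : Type} (G : SimpleGraph V) (hmin : MinimalArrows G 3 3) (x : V) :
    ∃ c : Sym2 ↥({x}ᶜ : Set V) → Bool, IsFree (G.induce {x}ᶜ) 3 3 c := by
  have hne : ({x}ᶜ : Set V) ≠ Set.univ := by
    intro h
    have hx : x ∈ ({x}ᶜ : Set V) := h ▸ Set.mem_univ x
    exact hx rfl
  have h := hmin.2 {x}ᶜ (G.induce {x}ᶜ) le_rfl (Or.inl hne)
  simp only [Arrows, not_forall, not_not] at h
  exact h

/-- If `G` is a minimal `(3, 3)`-Ramsey graph, `A` is a set of pairwise non-adjacent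
vertices of `G`, and `H = G - A`, then the family of neighborhoods `{N_G(v) : v ∈ A}` is a
complete family of marked vertex sets in `H`, and no proper subfamily of it is complete. -/
theorem stmt_5 {V : Type} [Fintype V] (G : SimpleGraph V) (hmin : MinimalArrows G 3 3)
    (A : Set V) (hA : ∀ u ∈ A, ∀ w ∈ A, ¬ G.Adj u w) :
    IsCompleteFamily (G.induce Aᶜ) (fun v : A => {w : ↥Aᶜ | G.Adj v.1 w.1}) ∧
    ∀ B : Set ↥A, B ≠ Set.univ →
      ¬ IsCompleteFamily (G.induce Aᶜ) (fun v : B => {w : ↥Aᶜ | G.Adj v.1.1 w.1}) := by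
  classical
  constructor
  · constructor
    · -- every neighborhood is marked
      rintro ⟨v, hvA⟩
      obtain ⟨ct, hct⟩ := exists_free_del G hmin v
      have hAs : ∀ w : V, w ∉ A → w ∈ (({v} : Set V))ᶜ := by
        intro w hw h
        exact hw (Set.mem_singleton_iff.mp h ▸ hvA)
      let ι : ↥Aᶜ → ↥(({v} : Set V)ᶜ) := fun w => ⟨w.1, hAs w.1 w.2⟩
      refine ⟨fun e => ct (e.map ι), isFree_pull _ _ ι (fun x y h => h) ct hct, ?_⟩
      intro c' hext hfree'
      -- build a full coloring of G
      set p : V → Bool := fun z =>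
        if h : z ∈ A then true else c' s(none, some ⟨z, h⟩) with hp_def
      have hp : ∀ z (h : z ∉ A), p z = c' s(none, some ⟨z, h⟩) := by
        intro z h
        simp only [hp_def]
        rw [dif_neg h]
      set q : V → V → Bool := fun x y =>
        if h : ¬ x = v ∧ ¬ y = v then ct s(⟨x, h.1⟩, ⟨y, h.2⟩) else true with hq_def
      have hq : ∀ x y (hx : x ≠ v) (hy : y ≠ v), q x y = ct s(⟨x, hx⟩, ⟨y, hy⟩) := by
        intro x y hx hy
        simp only [hq_def]
        rw [dif_pos ⟨hx, hy⟩]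
      set f : V → V → Bool := fun x y =>
        if x = v then p y else if y = v then p x else q x y with hf_def
      have hfv : ∀ z, f v z = p z := by
        intro z
        simp [hf_def]
      have hfv' : ∀ z, f z v = p z := by
        intro z
        by_cases h : z = v <;> simp [hf_def, h]
      have hfq : ∀ x y, x ≠ v → y ≠ v → f x y = q x y := by
        intro x y hx hy
        simp [hf_def, hx, hy]
      have hfsymm : ∀ x y, f x y = f y x := by
        intro x y
        by_cases hx : x = v
        · subst hx; rw [hfv, hfv']
        · by_cases hy : y = v
          · subst hy; rw [hfv, hfv']
          · rw [hfq x y hx hy, hfq y x hy hx, hq x y hx hy, hq y x hy hx, Sym2.eq_swap]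
      refine hmin.1 (Sym2.lift ⟨f, hfsymm⟩) ?_
      rw [isFree_iff_triples] at hct hfree' ⊢
      have hlift : ∀ x y : V, Sym2.lift ⟨f, hfsymm⟩ s(x, y) = f x y :=
        fun x y => Sym2.lift_mk ⟨f, hfsymm⟩ x y
      intro a b d hab had hbd hcolor
      rw [hlift, hlift, hlift] at hcolor
      obtain ⟨e1, e2⟩ := hcolor
      have bridge : ∀ (x y : V) (hx : x ∉ A) (hy : y ∉ A) (hx' : x ≠ v) (hy' : y ≠ v),
          ct s(⟨x, hx'⟩, ⟨y, hy'⟩) = c' s(some ⟨x, hx⟩, some ⟨y, hy⟩) := by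
        intro x y hx hy hx' hy'
        exact (hext s(⟨x, hx⟩, ⟨y, hy⟩)).symm
      by_cases ha : a = v
      · rw [ha] at hab had e1 e2
        have hbv : b ≠ v := hab.ne'
        have hdv : d ≠ v := had.ne'
        have hbA : b ∉ A := fun h => hA v hvA b h hab
        have hdA : d ∉ A := fun h => hA v hvA d h had
        rw [hfv b, hp b hbA, hfv d, hp d hdA] at e1
        rw [hfv d, hp d hdA, hfq b d hbv hdv, hq b d hbv hdv] at e2
        exact hfree' none (some ⟨b, hbA⟩) (some ⟨d, hdA⟩) hab had hbd
          ⟨e1, e2.trans (bridge b d hbA hdA hbv hdv)⟩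
      · by_cases hb : b = v
        · rw [hb] at hab hbd e1 e2
          have hdv : d ≠ v := hbd.ne'
          have haA : a ∉ A := fun h => hA v hvA a h hab.symm
          have hdA : d ∉ A := fun h => hA v hvA d h hbd
          rw [hfv' a, hp a haA, hfq a d ha hdv, hq a d ha hdv] at e1
          rw [hfq a d ha hdv, hq a d ha hdv, hfv d, hp d hdA] at e2
          exact hfree' none (some ⟨a, haA⟩) (some ⟨d, hdA⟩) hab.symm hbd had
            ⟨e1.trans e2, e2.symm.trans (bridge a d haA hdA ha hdv)⟩
        · by_cases hd : d = v
          · rw [hd] at had hbd e1 e2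
            have haA : a ∉ A := fun h => hA v hvA a h had.symm
            have hbA : b ∉ A := fun h => hA v hvA b h hbd.symm
            rw [hfq a b ha hb, hq a b ha hb, hfv' a, hp a haA] at e1
            rw [hfv' a, hp a haA, hfv' b, hp b hbA] at e2
            exact hfree' none (some ⟨a, haA⟩) (some ⟨b, hbA⟩) had.symm hbd.symm hab
              ⟨e2, e2.symm.trans (e1.symm.trans (bridge a b haA hbA ha hb))⟩
          · rw [hfq a b ha hb, hq a b ha hb, hfq a d ha hd, hq a d ha hd] at e1
            rw [hfq a d ha hd, hq a d ha hd, hfq b d hb hd, hq b d hb hd] at e2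
            exact hct ⟨a, ha⟩ ⟨b, hb⟩ ⟨d, hd⟩ hab had hbd ⟨e1, e2⟩
    · -- completeness
      intro c hc
      by_contra hno
      push_neg at hno
      choose c' hext hfree using hno
      set p : V → V → Bool := fun x y =>
        if h : x ∈ A ∧ y ∉ A then c' ⟨x, h.1⟩ s(none, some ⟨y, h.2⟩) else true with hp_def
      have hp : ∀ x y (hx : x ∈ A) (hy : y ∉ A),
          p x y = c' ⟨x, hx⟩ s(none, some ⟨y, hy⟩) := by
        intro x y hx hy
        simp only [hp_def]
        rw [dif_pos ⟨hx, hy⟩]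
      have hp_true : ∀ x y, y ∈ A → p x y = true := by
        intro x y hy
        simp only [hp_def]
        rw [dif_neg (fun h => h.2 hy)]
      set q : V → V → Bool := fun x y =>
        if h : x ∉ A ∧ y ∉ A then c s(⟨x, h.1⟩, ⟨y, h.2⟩) else true with hq_def
      have hq : ∀ x y (hx : x ∉ A) (hy : y ∉ A), q x y = c s(⟨x, hx⟩, ⟨y, hy⟩) := by
        intro x y hx hy
        simp only [hq_def]
        rw [dif_pos ⟨hx, hy⟩]
      set f : V → V → Bool := fun x y =>
        if x ∈ A then p x y else if y ∈ A then p y x else q x y with hf_def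
      have hfA : ∀ x y, x ∈ A → f x y = p x y := by
        intro x y hx
        simp [hf_def, hx]
      have hfA' : ∀ x y, x ∉ A → y ∈ A → f x y = p y x := by
        intro x y hx hy
        simp [hf_def, hx, hy]
      have hfq : ∀ x y, x ∉ A → y ∉ A → f x y = q x y := by
        intro x y hx hy
        simp [hf_def, hx, hy]
      have hfsymm : ∀ x y, f x y = f y x := by
        intro x y
        by_cases hx : x ∈ A
        · by_cases hy : y ∈ A
          · rw [hfA x y hx, hfA y x hy, hp_true x y hy, hp_true y x hx]
          · rw [hfA x y hx, hfA' y x hy hx]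
        · by_cases hy : y ∈ A
          · rw [hfA' x y hx hy, hfA y x hy]
          · rw [hfq x y hx hy, hfq y x hy hx, hq x y hx hy, hq y x hy hx, Sym2.eq_swap]
      refine hmin.1 (Sym2.lift ⟨f, hfsymm⟩) ?_
      rw [isFree_iff_triples] at hc ⊢
      have hfreeT := fun i => (isFree_iff_triples _ _).mp (hfree i)
      have hlift : ∀ x y : V, Sym2.lift ⟨f, hfsymm⟩ s(x, y) = f x y :=
        fun x y => Sym2.lift_mk ⟨f, hfsymm⟩ x y
      intro a b d hab had hbd hcolor
      rw [hlift, hlift, hlift] at hcolor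
      obtain ⟨e1, e2⟩ := hcolor
      have bridge : ∀ (i : ↥A) (x y : V) (hx : x ∉ A) (hy : y ∉ A),
          c s(⟨x, hx⟩, ⟨y, hy⟩) = c' i s(some ⟨x, hx⟩, some ⟨y, hy⟩) :=
        fun i x y hx hy => (hext i s(⟨x, hx⟩, ⟨y, hy⟩)).symm
      by_cases ha : a ∈ A
      · have hbA : b ∉ A := fun h => hA a ha b h hab
        have hdA : d ∉ A := fun h => hA a ha d h had
        rw [hfA a b ha, hp a b ha hbA, hfA a d ha, hp a d ha hdA] at e1
        rw [hfA a d ha, hp a d ha hdA, hfq b d hbA hdA, hq b d hbA hdA] at e2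
        exact hfreeT ⟨a, ha⟩ none (some ⟨b, hbA⟩) (some ⟨d, hdA⟩) hab had hbd
          ⟨e1, e2.trans (bridge ⟨a, ha⟩ b d hbA hdA)⟩
      · by_cases hb : b ∈ A
        · have haA : a ∉ A := ha
          have hdA : d ∉ A := fun h => hA b hb d h hbd
          rw [hfA' a b haA hb, hp b a hb haA, hfq a d haA hdA, hq a d haA hdA] at e1
          rw [hfq a d haA hdA, hq a d haA hdA, hfA b d hb, hp b d hb hdA] at e2
          exact hfreeT ⟨b, hb⟩ none (some ⟨a, haA⟩) (some ⟨d, hdA⟩) hab.symm hbd had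
            ⟨e1.trans e2, e2.symm.trans (bridge ⟨b, hb⟩ a d haA hdA)⟩
        · by_cases hd : d ∈ A
          · have haA : a ∉ A := ha
            have hbA : b ∉ A := hb
            rw [hfq a b haA hbA, hq a b haA hbA, hfA' a d haA hd, hp d a hd haA] at e1
            rw [hfA' a d haA hd, hp d a hd haA, hfA' b d hbA hd, hp d b hd hbA] at e2
            exact hfreeT ⟨d, hd⟩ none (some ⟨a, haA⟩) (some ⟨b, hbA⟩) had.symm hbd.symm hab
              ⟨e2, e2.symm.trans (e1.symm.trans (bridge ⟨d, hd⟩ a b haA hbA))⟩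
          · rw [hfq a b ha hb, hq a b ha hb, hfq a d ha hd, hq a d ha hd] at e1
            rw [hfq a d ha hd, hq a d ha hd, hfq b d hb hd, hq b d hb hd] at e2
            exact hc ⟨a, ha⟩ ⟨b, hb⟩ ⟨d, hd⟩ hab had hbd ⟨e1, e2⟩
  · -- minimality of the family
    intro B hB hcompl
    obtain ⟨v₀, hv₀⟩ : ∃ v₀ : ↥A, v₀ ∉ B := by
      by_contra h
      push_neg at h
      exact hB (Set.eq_univ_iff_forall.mpr h)
    obtain ⟨ct, hct⟩ := exists_free_del G hmin (v₀ : V)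
    have hAs : ∀ w : V, w ∉ A → w ∈ (({(v₀ : V)} : Set V))ᶜ := by
      intro w hw h
      exact hw (Set.mem_singleton_iff.mp h ▸ v₀.2)
    let ι : ↥Aᶜ → ↥(({(v₀ : V)} : Set V)ᶜ) := fun w => ⟨w.1, hAs w.1 w.2⟩
    obtain ⟨i, hi⟩ := hcompl.2 (fun e => ct (e.map ι))
      (isFree_pull _ _ ι (fun x y h => h) ct hct)
    have hiv : (i : ↥A) ≠ v₀ := fun h => hv₀ (h ▸ i.2)
    let o : Option ↥Aᶜ → ↥(({(v₀ : V)} : Set V)ᶜ) := fun x =>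
      x.elim ⟨((i : ↥A) : V), fun h => hiv (Subtype.ext (Set.mem_singleton_iff.mp h))⟩ ι
    refine hi (fun e => ct (e.map o)) ?_ ?_
    · intro e
      show ct ((e.map some).map o) = ct (e.map ι)
      rw [Sym2.map_map]
      rfl
    · refine isFree_pull _ _ o ?_ ct hct
      rintro (_ | x) (_ | y) h
      · exact h.elim
      · exact h
      · exact G.adj_symm h
      · exact h
end

section
/- If G is a minimal (3, 3)-Ramsey graph with G ≠ K_6 and minimum degree δ(G) ≤ 5, then the K_3-multiplicity of G equals 1; that is, there exists a 2-coloring of the edges of G with exactly one monochromatic triangle. -/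
open SimpleGraph

namespace Stmt17Aux

def fst10v : Fin 10 → Fin 5 := ![0, 0, 0, 0, 1, 1, 1, 2, 2, 3]
def snd10v : Fin 10 → Fin 5 := ![1, 2, 3, 4, 2, 3, 4, 3, 4, 4]

def monoT (e : Fin 5 → Fin 5 → Fin 3) (f : Fin 5 → Bool) (i j : Fin 5) : Bool :=
  (f i == f j) && (e i j == cond (f i) 1 2)

def mtvec (e : Fin 5 → Fin 5 → Fin 3) (f : Fin 5 → Bool) : Fin 10 → Bool :=
  ![monoT e f 0 1, monoT e f 0 2, monoT e f 0 3, monoT e f 0 4, monoT e f 1 2,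
    monoT e f 1 3, monoT e f 1 4, monoT e f 2 3, monoT e f 2 4, monoT e f 3 4]

def Mono5 (e : Fin 5 → Fin 5 → Fin 3) (f : Fin 5 → Bool) (i j : Fin 5) : Prop :=
  i ≠ j ∧ f i = f j ∧ e i j = cond (f i) 1 2

theorem atMostOne : ∀ t0 t1 t2 t3 t4 t5 t6 t7 t8 t9 : Bool,
    Nat.ble (t0.toNat + t1.toNat + t2.toNat + t3.toNat + t4.toNat + t5.toNat + t6.toNat +
      t7.toNat + t8.toNat + t9.toNat) 1 = true →
    ∀ p q : Fin 10, p ≠ q →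
      ¬(![t0, t1, t2, t3, t4, t5, t6, t7, t8, t9] p = true ∧
        ![t0, t1, t2, t3, t4, t5, t6, t7, t8, t9] q = true) := by decide

theorem ordGet : ∀ i j : Fin 5, i < j → ∃ p : Fin 10, fst10v p = i ∧ snd10v p = j := by decide

theorem mtvec_eq (e : Fin 5 → Fin 5 → Fin 3) (f : Fin 5 → Bool) (p : Fin 10) :
    mtvec e f p = monoT e f (fst10v p) (snd10v p) := by
  fin_cases p <;> rfl

theorem mono_swap {e : Fin 5 → Fin 5 → Fin 3} (hsym : ∀ i j, e i j = e j i)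
    {f : Fin 5 → Bool} {i j : Fin 5} (h : Mono5 e f i j) : Mono5 e f j i :=
  ⟨h.1.symm, h.2.1.symm, by rw [← hsym, h.2.2, h.2.1]⟩

theorem mono_exists {e : Fin 5 → Fin 5 → Fin 3} (hsym : ∀ i j, e i j = e j i)
    {f : Fin 5 → Bool} {i j : Fin 5} (h : Mono5 e f i j) :
    ∃ p : Fin 10, mtvec e f p = true ∧ s(fst10v p, snd10v p) = s(i, j) := by
  rcases lt_trichotomy i j with hlt | heq | hlt
  · obtain ⟨p, h1, h2⟩ := ordGet i j hlt
    refine ⟨p, ?_, by rw [h1, h2]⟩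
    rw [mtvec_eq, h1, h2]
    simp [monoT, h.2.1, h.2.2]
  · exact absurd heq h.1
  · obtain ⟨p, h1, h2⟩ := ordGet j i hlt
    have h' := mono_swap hsym h
    refine ⟨p, ?_, by rw [h1, h2]; exact Sym2.eq_swap⟩
    rw [mtvec_eq, h1, h2]
    simp [monoT, h'.2.1, h'.2.2]

theorem uniq_of_atMostOne (e : Fin 5 → Fin 5 → Fin 3) (hsym : ∀ i j, e i j = e j i)
    (f : Fin 5 → Bool)
    (hU : ∀ p q : Fin 10, p ≠ q → ¬(mtvec e f p = true ∧ mtvec e f q = true)) :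
    ∀ i j k l : Fin 5, Mono5 e f i j → Mono5 e f k l → s(i, j) = s(k, l) := by
  intro i j k l h1 h2
  obtain ⟨p, hp, hps⟩ := mono_exists hsym h1
  obtain ⟨q, hq, hqs⟩ := mono_exists hsym h2
  by_contra hne
  exact hU p q (fun h => hne (by rw [← hps, ← hqs, h])) ⟨hp, hq⟩

theorem tfclause : ∀ a b c : Fin 3, ¬(a ≠ 0 ∧ a = b ∧ b = c) →
    (!(a != 0 && (a == b) && (b == c))) = true := by decide


set_option maxRecDepth 10000 in
set_option maxHeartbeats 10000000 in
theorem keyFdecide : ∀ d0 d1 d2 d3 d4 d5 d6 d7 d8 d9 : Fin 3,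
    (((!(d0 != 0 && (d0 == d1) && (d1 == d4))) && ((!(d0 != 0 && (d0 == d2) && (d2 == d5))) && ((!(d0 != 0 && (d0 == d3) && (d3 == d6))) && ((!(d1 != 0 && (d1 == d2) && (d2 == d7))) && ((!(d1 != 0 && (d1 == d3) && (d3 == d8))) && ((!(d2 != 0 && (d2 == d3) && (d3 == d9))) && ((!(d4 != 0 && (d4 == d5) && (d5 == d7))) && ((!(d4 != 0 && (d4 == d6) && (d6 == d8))) && ((!(d5 != 0 && (d5 == d6) && (d6 == d9))) && (!(d7 != 0 && (d7 == d8) && (d8 == d9))))))))))))) = true →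
    (((Nat.ble ((d0 == 2).toNat + (d1 == 2).toNat + (d2 == 2).toNat + (d3 == 2).toNat + (d4 == 2).toNat + (d5 == 2).toNat + (d6 == 2).toNat + (d7 == 2).toNat + (d8 == 2).toNat + (d9 == 2).toNat) 1) || ((Nat.ble (0 + 0 + 0 + 0 + (d4 == 2).toNat + (d5 == 2).toNat + (d6 == 2).toNat + (d7 == 2).toNat + (d8 == 2).toNat + (d9 == 2).toNat) 1) || ((Nat.ble (0 + (d1 == 2).toNat + (d2 == 2).toNat + (d3 == 2).toNat + 0 + 0 + 0 + (d7 == 2).toNat + (d8 == 2).toNat + (d9 == 2).toNat) 1) || ((Nat.ble ((d0 == 1).toNat + 0 + 0 + 0 + 0 + 0 + 0 + (d7 == 2).toNat + (d8 == 2).toNat + (d9 == 2).toNat) 1) || ((Nat.ble ((d0 == 2).toNat + 0 + (d2 == 2).toNat + (d3 == 2).toNat + 0 + (d5 == 2).toNat + (d6 == 2).toNat + 0 + 0 + (d9 == 2).toNat) 1) || ((Nat.ble (0 + (d1 == 1).toNat + 0 + 0 + 0 + (d5 == 2).toNat + (d6 == 2).toNat + 0 + 0 + (d9 == 2).toNat)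 1) || ((Nat.ble (0 + 0 + (d2 == 2).toNat + (d3 == 2).toNat + (d4 == 1).toNat + 0 + 0 + 0 + 0 + (d9 == 2).toNat) 1) || ((Nat.ble ((d0 == 1).toNat + (d1 == 1).toNat + 0 + 0 + (d4 == 1).toNat + 0 + 0 + 0 + 0 + (d9 == 2).toNat) 1) || ((Nat.ble ((d0 == 2).toNat + (d1 == 2).toNat + 0 + (d3 == 2).toNat + (d4 == 2).toNat + 0 + (d6 == 2).toNat + 0 + (d8 == 2).toNat + 0) 1) || ((Nat.ble (0 + 0 + (d2 == 1).toNat + 0 + (d4 == 2).toNat + 0 + (d6 == 2).toNat + 0 + (d8 == 2).toNat + 0) 1) || ((Nat.ble (0 + (d1 == 2).toNat + 0 + (d3 == 2).toNat + 0 + (d5 == 1).toNat + 0 + 0 + (d8 == 2).toNat + 0) 1) || ((Nat.ble ((d0 == 1).toNat + 0 + (d2 == 1).toNat + 0 + 0 + (d5 == 1).toNat + 0 + 0 + (d8 == 2).toNat + 0) 1) || ((Nat.ble ((d0 == 2).toNat + 0 + 0 + (d3 == 2).toNat + 0 + 0 + (d6 == 2).toNat + (d7 == 1).toNat + 0 +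 0) 1) || ((Nat.ble (0 + (d1 == 1).toNat + (d2 == 1).toNat + 0 + 0 + 0 + (d6 == 2).toNat + (d7 == 1).toNat + 0 + 0) 1) || ((Nat.ble (0 + 0 + 0 + (d3 == 2).toNat + (d4 == 1).toNat + (d5 == 1).toNat + 0 + (d7 == 1).toNat + 0 + 0) 1) || ((Nat.ble ((d0 == 1).toNat + (d1 == 1).toNat + (d2 == 1).toNat + 0 + (d4 == 1).toNat + (d5 == 1).toNat + 0 + (d7 == 1).toNat + 0 + 0) 1) || ((Nat.ble ((d0 == 2).toNat + (d1 == 2).toNat + (d2 == 2).toNat + 0 + (d4 == 2).toNat + (d5 == 2).toNat + 0 + (d7 == 2).toNat + 0 + 0) 1) || ((Nat.ble (0 + 0 + 0 + (d3 == 1).toNat + (d4 == 2).toNat + (d5 == 2).toNat + 0 + (d7 == 2).toNat + 0 + 0) 1) || ((Nat.ble (0 + (d1 == 2).toNat + (d2 == 2).toNat + 0 + 0 + 0 + (d6 == 1).toNat + (d7 == 2).toNat + 0 + 0) 1) || ((Nat.ble ((d0 == 1).toNat + 0 + 0 + (d3 == 1).toNat + 0 + 0 + (d6 == 1).toNat +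 (d7 == 2).toNat + 0 + 0) 1) || ((Nat.ble ((d0 == 2).toNat + 0 + (d2 == 2).toNat + 0 + 0 + (d5 == 2).toNat + 0 + 0 + (d8 == 1).toNat + 0) 1) || ((Nat.ble (0 + (d1 == 1).toNat + 0 + (d3 == 1).toNat + 0 + (d5 == 2).toNat + 0 + 0 + (d8 == 1).toNat + 0) 1) || ((Nat.ble (0 + 0 + (d2 == 2).toNat + 0 + (d4 == 1).toNat + 0 + (d6 == 1).toNat + 0 + (d8 == 1).toNat + 0) 1) || ((Nat.ble ((d0 == 1).toNat + (d1 == 1).toNat + 0 + (d3 == 1).toNat + (d4 == 1).toNat + 0 + (d6 == 1).toNat + 0 + (d8 == 1).toNat + 0) 1) || ((Nat.ble ((d0 == 2).toNat + (d1 == 2).toNat + 0 + 0 + (d4 == 2).toNat + 0 + 0 + 0 + 0 + (d9 == 1).toNat) 1) || ((Nat.ble (0 + 0 + (d2 == 1).toNat + (d3 == 1).toNat + (d4 == 2).toNat + 0 + 0 + 0 + 0 + (d9 == 1).toNat) 1) || ((Nat.ble (0 + (d1 == 2).toNat + 0 + 0 + 0 + (d5 == 1).toNat + (d6 == 1).toNat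 + 0 + 0 + (d9 == 1).toNat) 1) || ((Nat.ble ((d0 == 1).toNat + 0 + (d2 == 1).toNat + (d3 == 1).toNat + 0 + (d5 == 1).toNat + (d6 == 1).toNat + 0 + 0 + (d9 == 1).toNat) 1) || ((Nat.ble ((d0 == 2).toNat + 0 + 0 + 0 + 0 + 0 + 0 + (d7 == 1).toNat + (d8 == 1).toNat + (d9 == 1).toNat) 1) || ((Nat.ble (0 + (d1 == 1).toNat + (d2 == 1).toNat + (d3 == 1).toNat + 0 + 0 + 0 + (d7 == 1).toNat + (d8 == 1).toNat + (d9 == 1).toNat) 1) || ((Nat.ble (0 + 0 + 0 + 0 + (d4 == 1).toNat + (d5 == 1).toNat + (d6 == 1).toNat + (d7 == 1).toNat + (d8 == 1).toNat + (d9 == 1).toNat) 1) || ((Nat.ble ((d0 == 1).toNat + (d1 == 1).toNat + (d2 == 1).toNat + (d3 == 1).toNat + (d4 == 1).toNat + (d5 == 1).toNat + (d6 == 1).toNat + (d7 == 1).toNat + (d8 == 1).toNat + (d9 == 1).toNat) 1) || ((d0 != 0) && ((d1 != 0) && ((d2 != 0) && ((d3 != 0) && ((d4 != 0) && ((d5 !=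 0) && ((d6 != 0) && ((d7 != 0) && ((d8 != 0) && (d9 != 0))))))))))))))))))))))))))))))))))))))))))) = true := by decide
theorem key5P (e : Fin 5 → Fin 5 → Fin 3) (hsym : ∀ i j, e i j = e j i)
    (tf : ∀ i j k : Fin 5, i ≠ j → i ≠ k → j ≠ k →
      ¬(e i j ≠ 0 ∧ e i j = e i k ∧ e i k = e j k)) :
    (∃ f : Fin 5 → Bool, ∀ i j k l : Fin 5,
        Mono5 e f i j → Mono5 e f k l → s(i, j) = s(k, l)) ∨
    (∀ i j : Fin 5, i ≠ j → e i j ≠ 0) := by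
  have h := keyFdecide (e 0 1) (e 0 2) (e 0 3) (e 0 4) (e 1 2) (e 1 3) (e 1 4) (e 2 3)
    (e 2 4) (e 3 4) ?htf
  case htf =>
    simp only [Bool.and_eq_true]
    exact ⟨tfclause _ _ _ (tf 0 1 2 (by decide) (by decide) (by decide)), tfclause _ _ _ (tf 0 1 3 (by decide) (by decide) (by decide)), tfclause _ _ _ (tf 0 1 4 (by decide) (by decide) (by decide)), tfclause _ _ _ (tf 0 2 3 (by decide) (by decide) (by decide)), tfclause _ _ _ (tf 0 2 4 (by decide) (by decide) (by decide)), tfclause _ _ _ (tf 0 3 4 (by decide) (by decide) (by decide)), tfclause _ _ _ (tf 1 2 3 (by decide) (by decide) (by decide)), tfclause _ _ _ (tf 1 2 4 (by decide) (by decide) (by decide)), tfclause _ _ _ (tf 1 3 4 (by decide) (by decide) (by decide)), tfclause _ _ _ (tf 2 3 4 (by decide) (by decide) (by decide))⟩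
  simp only [Bool.or_eq_true] at h
  rcases h with h|h|h|h|h|h|h|h|h|h|h|h|h|h|h|h|h|h|h|h|h|h|h|h|h|h|h|h|h|h|h|h|h
  · exact Or.inl ⟨![false,false,false,false,false], uniq_of_atMostOne e hsym ![false,false,false,false,false] (atMostOne _ _ _ _ _ _ _ _ _ _ h)⟩
  · exact Or.inl ⟨![true,false,false,false,false], uniq_of_atMostOne e hsym ![true,false,false,false,false] (atMostOne _ _ _ _ _ _ _ _ _ _ h)⟩
  · exact Or.inl ⟨![false,true,false,false,false], uniq_of_atMostOne e hsym ![false,true,false,false,false] (atMostOne _ _ _ _ _ _ _ _ _ _ h)⟩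
  · exact Or.inl ⟨![true,true,false,false,false], uniq_of_atMostOne e hsym ![true,true,false,false,false] (atMostOne _ _ _ _ _ _ _ _ _ _ h)⟩
  · exact Or.inl ⟨![false,false,true,false,false], uniq_of_atMostOne e hsym ![false,false,true,false,false] (atMostOne _ _ _ _ _ _ _ _ _ _ h)⟩
  · exact Or.inl ⟨![true,false,true,false,false], uniq_of_atMostOne e hsym ![true,false,true,false,false] (atMostOne _ _ _ _ _ _ _ _ _ _ h)⟩
  · exact Or.inl ⟨![false,true,true,false,false], uniq_of_atMostOne e hsym ![false,true,true,false,false] (atMostOne _ _ _ _ _ _ _ _ _ _ h)⟩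
  · exact Or.inl ⟨![true,true,true,false,false], uniq_of_atMostOne e hsym ![true,true,true,false,false] (atMostOne _ _ _ _ _ _ _ _ _ _ h)⟩
  · exact Or.inl ⟨![false,false,false,true,false], uniq_of_atMostOne e hsym ![false,false,false,true,false] (atMostOne _ _ _ _ _ _ _ _ _ _ h)⟩
  · exact Or.inl ⟨![true,false,false,true,false], uniq_of_atMostOne e hsym ![true,false,false,true,false] (atMostOne _ _ _ _ _ _ _ _ _ _ h)⟩
  · exact Or.inl ⟨![false,true,false,true,false], uniq_of_atMostOne e hsym ![false,true,false,true,false] (atMostOne _ _ _ _ _ _ _ _ _ _ h)⟩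
  · exact Or.inl ⟨![true,true,false,true,false], uniq_of_atMostOne e hsym ![true,true,false,true,false] (atMostOne _ _ _ _ _ _ _ _ _ _ h)⟩
  · exact Or.inl ⟨![false,false,true,true,false], uniq_of_atMostOne e hsym ![false,false,true,true,false] (atMostOne _ _ _ _ _ _ _ _ _ _ h)⟩
  · exact Or.inl ⟨![true,false,true,true,false], uniq_of_atMostOne e hsym ![true,false,true,true,false] (atMostOne _ _ _ _ _ _ _ _ _ _ h)⟩
  · exact Or.inl ⟨![false,true,true,true,false], uniq_of_atMostOne e hsym ![false,true,true,true,false] (atMostOne _ _ _ _ _ _ _ _ _ _ h)⟩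
  · exact Or.inl ⟨![true,true,true,true,false], uniq_of_atMostOne e hsym ![true,true,true,true,false] (atMostOne _ _ _ _ _ _ _ _ _ _ h)⟩
  · exact Or.inl ⟨![false,false,false,false,true], uniq_of_atMostOne e hsym ![false,false,false,false,true] (atMostOne _ _ _ _ _ _ _ _ _ _ h)⟩
  · exact Or.inl ⟨![true,false,false,false,true], uniq_of_atMostOne e hsym ![true,false,false,false,true] (atMostOne _ _ _ _ _ _ _ _ _ _ h)⟩
  · exact Or.inl ⟨![false,true,false,false,true], uniq_of_atMostOne e hsym ![false,true,false,false,true] (atMostOne _ _ _ _ _ _ _ _ _ _ h)⟩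
  · exact Or.inl ⟨![true,true,false,false,true], uniq_of_atMostOne e hsym ![true,true,false,false,true] (atMostOne _ _ _ _ _ _ _ _ _ _ h)⟩
  · exact Or.inl ⟨![false,false,true,false,true], uniq_of_atMostOne e hsym ![false,false,true,false,true] (atMostOne _ _ _ _ _ _ _ _ _ _ h)⟩
  · exact Or.inl ⟨![true,false,true,false,true], uniq_of_atMostOne e hsym ![true,false,true,false,true] (atMostOne _ _ _ _ _ _ _ _ _ _ h)⟩
  · exact Or.inl ⟨![false,true,true,false,true], uniq_of_atMostOne e hsym ![false,true,true,false,true] (atMostOne _ _ _ _ _ _ _ _ _ _ h)⟩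
  · exact Or.inl ⟨![true,true,true,false,true], uniq_of_atMostOne e hsym ![true,true,true,false,true] (atMostOne _ _ _ _ _ _ _ _ _ _ h)⟩
  · exact Or.inl ⟨![false,false,false,true,true], uniq_of_atMostOne e hsym ![false,false,false,true,true] (atMostOne _ _ _ _ _ _ _ _ _ _ h)⟩
  · exact Or.inl ⟨![true,false,false,true,true], uniq_of_atMostOne e hsym ![true,false,false,true,true] (atMostOne _ _ _ _ _ _ _ _ _ _ h)⟩
  · exact Or.inl ⟨![false,true,false,true,true], uniq_of_atMostOne e hsym ![false,true,false,true,true] (atMostOne _ _ _ _ _ _ _ _ _ _ h)⟩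
  · exact Or.inl ⟨![true,true,false,true,true], uniq_of_atMostOne e hsym ![true,true,false,true,true] (atMostOne _ _ _ _ _ _ _ _ _ _ h)⟩
  · exact Or.inl ⟨![false,false,true,true,true], uniq_of_atMostOne e hsym ![false,false,true,true,true] (atMostOne _ _ _ _ _ _ _ _ _ _ h)⟩
  · exact Or.inl ⟨![true,false,true,true,true], uniq_of_atMostOne e hsym ![true,false,true,true,true] (atMostOne _ _ _ _ _ _ _ _ _ _ h)⟩
  · exact Or.inl ⟨![false,true,true,true,true], uniq_of_atMostOne e hsym ![false,true,true,true,true] (atMostOne _ _ _ _ _ _ _ _ _ _ h)⟩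
  · exact Or.inl ⟨![true,true,true,true,true], uniq_of_atMostOne e hsym ![true,true,true,true,true] (atMostOne _ _ _ _ _ _ _ _ _ _ h)⟩
  · right
    simp only [Bool.and_eq_true] at h
    obtain ⟨h0, h1, h2, h3, h4, h5, h6, h7, h8, h9⟩ := h
    replace h0 : e 0 1 ≠ 0 := by simpa using h0
    replace h1 : e 0 2 ≠ 0 := by simpa using h1
    replace h2 : e 0 3 ≠ 0 := by simpa using h2
    replace h3 : e 0 4 ≠ 0 := by simpa using h3
    replace h4 : e 1 2 ≠ 0 := by simpa using h4
    replace h5 : e 1 3 ≠ 0 := by simpa using h5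
    replace h6 : e 1 4 ≠ 0 := by simpa using h6
    replace h7 : e 2 3 ≠ 0 := by simpa using h7
    replace h8 : e 2 4 ≠ 0 := by simpa using h8
    replace h9 : e 3 4 ≠ 0 := by simpa using h9
    have key : ∀ i j : Fin 5, i < j → e i j ≠ 0 := by
      intro i j hij
      fin_cases i <;> fin_cases j <;>
        first
          | exact absurd hij (by decide)
          | assumption
    intro i j hij
    rcases lt_trichotomy i j with hlt | heq | hlt
    · exact key i j hlt
    · exact absurd heq hij
    · rw [hsym]; exact key j i hlt

set_option maxRecDepth 10000 in
set_option maxHeartbeats 10000000 in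
theorem r33formula : ∀ b0 b1 b2 b3 b4 b5 b6 b7 b8 b9 b10 b11 b12 b13 b14 : Bool,
    ((((b0 == b1) && (b1 == b5)) || (((b0 == b2) && (b2 == b6)) || (((b0 == b3) && (b3 == b7)) || (((b0 == b4) && (b4 == b8)) || (((b1 == b2) && (b2 == b9)) || (((b1 == b3) && (b3 == b10)) || (((b1 == b4) && (b4 == b11)) || (((b2 == b3) && (b3 == b12)) || (((b2 == b4) && (b4 == b13)) || (((b3 == b4) && (b4 == b14)) || (((b5 == b6) && (b6 == b9)) || (((b5 == b7) && (b7 == b10)) || (((b5 == b8) && (b8 == b11)) || (((b6 == b7) && (b7 == b12)) || (((b6 == b8) && (b8 == b13)) || (((b7 == b8) && (b8 == b14)) || (((b9 == b10) && (b10 == b12)) || (((b9 == b11) && (b11 == b13)) || (((b10 == b11) && (b11 == b14)) || ((b12 == b13) && (b13 == b14)))))))))))))))))))))) = true := by decide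
theorem r33P (c : Sym2 (Fin 6) → Bool) :
    ∃ i j k : Fin 6, i ≠ j ∧ i ≠ k ∧ j ≠ k ∧
      c s(i, j) = c s(i, k) ∧ c s(i, k) = c s(j, k) := by
  have h := r33formula (c s(0, 1)) (c s(0, 2)) (c s(0, 3)) (c s(0, 4)) (c s(0, 5)) (c s(1, 2)) (c s(1, 3)) (c s(1, 4)) (c s(1, 5)) (c s(2, 3)) (c s(2, 4)) (c s(2, 5)) (c s(3, 4)) (c s(3, 5)) (c s(4, 5))
  simp only [Bool.or_eq_true, Bool.and_eq_true, beq_iff_eq] at h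
  rcases h with ⟨h1, h2⟩|⟨h1, h2⟩|⟨h1, h2⟩|⟨h1, h2⟩|⟨h1, h2⟩|⟨h1, h2⟩|⟨h1, h2⟩|⟨h1, h2⟩|⟨h1, h2⟩|⟨h1, h2⟩|⟨h1, h2⟩|⟨h1, h2⟩|⟨h1, h2⟩|⟨h1, h2⟩|⟨h1, h2⟩|⟨h1, h2⟩|⟨h1, h2⟩|⟨h1, h2⟩|⟨h1, h2⟩|⟨h1, h2⟩
  · exact ⟨0, 1, 2, by decide, by decide, by decide, h1, h2⟩
  · exact ⟨0, 1, 3, by decide, by decide, by decide, h1, h2⟩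
  · exact ⟨0, 1, 4, by decide, by decide, by decide, h1, h2⟩
  · exact ⟨0, 1, 5, by decide, by decide, by decide, h1, h2⟩
  · exact ⟨0, 2, 3, by decide, by decide, by decide, h1, h2⟩
  · exact ⟨0, 2, 4, by decide, by decide, by decide, h1, h2⟩
  · exact ⟨0, 2, 5, by decide, by decide, by decide, h1, h2⟩
  · exact ⟨0, 3, 4, by decide, by decide, by decide, h1, h2⟩
  · exact ⟨0, 3, 5, by decide, by decide, by decide, h1, h2⟩
  · exact ⟨0, 4, 5, by decide, by decide, by decide, h1, h2⟩
  · exact ⟨1, 2, 3, by decide, by decide, by decide, h1, h2⟩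
  · exact ⟨1, 2, 4, by decide, by decide, by decide, h1, h2⟩
  · exact ⟨1, 2, 5, by decide, by decide, by decide, h1, h2⟩
  · exact ⟨1, 3, 4, by decide, by decide, by decide, h1, h2⟩
  · exact ⟨1, 3, 5, by decide, by decide, by decide, h1, h2⟩
  · exact ⟨1, 4, 5, by decide, by decide, by decide, h1, h2⟩
  · exact ⟨2, 3, 4, by decide, by decide, by decide, h1, h2⟩
  · exact ⟨2, 3, 5, by decide, by decide, by decide, h1, h2⟩
  · exact ⟨2, 4, 5, by decide, by decide, by decide, h1, h2⟩
  · exact ⟨3, 4, 5, by decide, by decide, by decide, h1, h2⟩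

theorem mono_clique_map {A B : Type} {GA : SimpleGraph A} {GB : SimpleGraph B}
    (φ : GA ≃g GB) (c : Sym2 B → Bool) {col : Bool} {n : ℕ} {t : Finset A}
    (h : IsMonoNClique GA (fun e => c (e.map φ)) col n t) :
    IsMonoNClique GB c col n (t.map φ.toEmbedding.toEmbedding) := by
  obtain ⟨⟨hcl, hcard⟩, hcol⟩ := h
  refine ⟨⟨?_, by rw [Finset.card_map]; exact hcard⟩, ?_⟩
  · intro x hx y hy hxy
    simp only [Finset.coe_map, Set.mem_image, Finset.mem_coe] at hx hy
    obtain ⟨a, ha, rfl⟩ := hx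
    obtain ⟨b, hb, rfl⟩ := hy
    have hab : a ≠ b := fun h => hxy (by rw [h])
    exact φ.map_adj_iff.mpr (hcl ha hb hab)
  · intro x hx y hy hxy
    simp only [Finset.mem_map] at hx hy
    obtain ⟨a, ha, rfl⟩ := hx
    obtain ⟨b, hb, rfl⟩ := hy
    have hab : a ≠ b := fun h => hxy (by rw [h])
    have := hcol a ha b hb hab
    simpa [Sym2.map_pair_eq] using this

theorem arrows_of_iso {A B : Type} {GA : SimpleGraph A} {GB : SimpleGraph B}
    (φ : GA ≃g GB) (h : Arrows GA 3 3) : Arrows GB 3 3 := by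
  intro c hc
  apply h (fun e => c (e.map φ))
  constructor
  · rintro ⟨t, ht⟩
    exact hc.1 ⟨_, mono_clique_map φ c ht⟩
  · rintro ⟨t, ht⟩
    exact hc.2 ⟨_, mono_clique_map φ c ht⟩

theorem arrows_top_fin6 : Arrows (⊤ : SimpleGraph (Fin 6)) 3 3 := by
  intro c hfree
  obtain ⟨i, j, k, hij, hik, hjk, h1, h2⟩ := r33P c
  have hmono : IsMonoNClique (⊤ : SimpleGraph (Fin 6)) c (c s(i, j)) 3 {i, j, k} := by
    constructor
    · rw [SimpleGraph.is3Clique_triple_iff]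
      simp only [top_adj]
      exact ⟨hij, hik, hjk⟩
    · intro u hu w hw hne
      simp only [Finset.mem_insert, Finset.mem_singleton] at hu hw
      have e1 : c s(j, i) = c s(i, j) := by rw [Sym2.eq_swap]
      have e2' : c s(k, i) = c s(i, k) := by rw [Sym2.eq_swap]
      have e3 : c s(k, j) = c s(j, k) := by rw [Sym2.eq_swap]
      rcases hu with rfl | rfl | rfl <;> rcases hw with rfl | rfl | rfl <;>
        first
          | exact absurd rfl hne
          | rfl
          | exact h1.symm
          | exact (h1.trans h2).symm
          | rw [e1]
          | rw [e2']; exact h1.symm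
          | rw [e3]; exact (h1.trans h2).symm
  cases hb : c s(i, j)
  · exact hfree.2 ⟨_, hb ▸ hmono⟩
  · exact hfree.1 ⟨_, hb ▸ hmono⟩

theorem arrows_top_card6 {A : Type} [Fintype A] (h : Fintype.card A = 6) :
    Arrows (⊤ : SimpleGraph A) 3 3 := by
  have e : A ≃ Fin 6 := Fintype.equivFinOfCardEq h
  have φ : (⊤ : SimpleGraph A) ≃g (⊤ : SimpleGraph (Fin 6)) :=
    ⟨e, by simp [top_adj, e.apply_eq_iff_eq]⟩
  exact arrows_of_iso φ.symm arrows_top_fin6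


end Stmt17Aux

/-- If `G` is a minimal `(3, 3)`-Ramsey graph with `G ≠ K₆` and `δ(G) ≤ 5`, then the
`K₃`-multiplicity of `G` equals 1. -/
theorem stmt_17 {V : Type} [Fintype V] (G : SimpleGraph V) (hmin : MinimalArrows G 3 3)
    (hK6 : ¬ Nonempty (G ≃g (⊤ : SimpleGraph (Fin 6))))
    (hd : minDeg G ≤ 5) :
    K3Multiplicity G = 1 := by
  classical
  obtain ⟨hG, hMin⟩ := hmin
  -- V is nonempty
  have hne : Nonempty V := by
    by_contra h
    apply hG (fun _ => true)
    constructor <;> rintro ⟨t, ⟨hcl, -⟩⟩ <;>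
    · have h3 := hcl.card_eq
      have ht : t = ∅ := Finset.eq_empty_of_forall_notMem fun x _ => h ⟨x⟩
      rw [ht] at h3
      simp at h3
  haveI : Nonempty V := hne
  -- final step helper
  have hfinal : 1 ∈ {m | ∃ c : Sym2 V → Bool,
      {t : Finset V | ∃ col, IsMonoNClique G c col 3 t}.ncard = m} → K3Multiplicity G = 1 := by
    intro h1
    have hlow : ∀ m ∈ {m | ∃ c : Sym2 V → Bool,
        {t : Finset V | ∃ col, IsMonoNClique G c col 3 t}.ncard = m}, 1 ≤ m := by
      rintro m ⟨c, hc⟩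
      rcases Nat.eq_zero_or_pos m with rfl | h
      · exfalso
        have hempty := (Set.ncard_eq_zero (Set.toFinite _)).mp hc
        apply hG c
        constructor <;> rintro ⟨t, ht⟩
        · exact absurd (show t ∈ {t : Finset V | ∃ col, IsMonoNClique G c col 3 t}
            from ⟨true, ht⟩) (by rw [hempty]; simp)
        · exact absurd (show t ∈ {t : Finset V | ∃ col, IsMonoNClique G c col 3 t}
            from ⟨false, ht⟩) (by rw [hempty]; simp)
      · exact h
    have hmem := Nat.sInf_mem (⟨1, h1⟩ : Set.Nonempty _)
    have hle := Nat.sInf_le h1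
    have hge := hlow _ hmem
    have hK : K3Multiplicity G = sInf {m | ∃ c : Sym2 V → Bool,
        {t : Finset V | ∃ col, IsMonoNClique G c col 3 t}.ncard = m} := rfl
    omega
  -- a vertex of degree at most 5
  obtain ⟨v, hv5⟩ : ∃ v : V, (G.neighborSet v).ncard ≤ 5 := by
    obtain ⟨v, hv⟩ := Nat.sInf_mem (Set.range_nonempty (deg G))
    refine ⟨v, ?_⟩
    have : deg G v ≤ 5 := by rw [hv]; exact hd
    exact this
  have hNadj : ∀ u : ↥(G.neighborSet v), G.Adj v ↑u := fun u => u.2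
  have hNv : ∀ u : ↥(G.neighborSet v), (u : V) ≠ v := fun u h => G.irrefl (h ▸ u.2)
  haveI : Fintype ↥(G.neighborSet v) := Fintype.ofFinite _
  have hcard : Fintype.card ↥(G.neighborSet v) ≤ 5 := by
    rw [← Nat.card_eq_fintype_card, Nat.card_coe_set_eq]
    exact hv5
  set ι : ↥(G.neighborSet v) ↪ Fin 5 :=
    (Fintype.equivFin ↥(G.neighborSet v)).toEmbedding.trans (Fin.castLEEmb hcard)
    with hιdef
  have hι : Function.Injective ι := ι.injective
  -- a free coloring of G minus v
  have hscne : ({v}ᶜ : Set V) ≠ Set.univ := by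
    intro h
    have hh : v ∈ ({v}ᶜ : Set V) := h ▸ Set.mem_univ v
    exact hh rfl
  obtain ⟨c₀, hc₀⟩ : ∃ c₀, IsFree (G.induce ({v}ᶜ : Set V)) 3 3 c₀ := by
    have h := hMin ({v}ᶜ : Set V) (G.induce _) le_rfl (Or.inl hscne)
    unfold Arrows at h
    push_neg at h
    exact h
  -- symmetric total extension of the coloring
  obtain ⟨cV, cV_symm, cV_eq⟩ :
      ∃ cV : V → V → Bool, (∀ a b, cV a b = cV b a) ∧
        (∀ a b : ↥({v}ᶜ : Set V), cV ↑a ↑b = c₀ s(a, b)) := by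
    refine ⟨fun a b =>
      if ha : a = v then false else if hb : b = v then false else
        c₀ s(⟨a, Set.mem_compl_singleton_iff.mpr ha⟩, ⟨b, Set.mem_compl_singleton_iff.mpr hb⟩),
      ?_, ?_⟩
    · intro a b
      by_cases ha : a = v <;> by_cases hb : b = v
      · rw [ha, hb]
      · simp [ha, hb]
      · simp [ha, hb]
      · simp only [dif_neg ha, dif_neg hb]
        congr 1
        exact Sym2.eq_swap
    · intro a b
      have ha := Set.mem_compl_singleton_iff.mp a.2
      have hb := Set.mem_compl_singleton_iff.mp b.2
      simp only [dif_neg ha, dif_neg hb, Subtype.coe_eta]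
  -- the edge function on Fin 5
  obtain ⟨e2, he2_symm, he2_adj, he2_val⟩ :
      ∃ e2 : Fin 5 → Fin 5 → Fin 3,
        (∀ i j, e2 i j = e2 j i) ∧
        (∀ u w : ↥(G.neighborSet v), G.Adj ↑u ↑w → e2 (ι u) (ι w) = cond (cV ↑u ↑w) 1 2) ∧
        (∀ i j, e2 i j ≠ 0 →
          ∃ u w : ↥(G.neighborSet v), ι u = i ∧ ι w = j ∧ G.Adj ↑u ↑w) := by
    refine ⟨fun i j =>
        if (∃ u w : ↥(G.neighborSet v), ι u = i ∧ ι w = j ∧ G.Adj ↑u ↑w ∧ cV ↑u ↑w = true) then 1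
        else if (∃ u w : ↥(G.neighborSet v), ι u = i ∧ ι w = j ∧ G.Adj ↑u ↑w) then 2 else 0,
      ?_, ?_, ?_⟩
    · intro i j
      simp only []
      have hiff1 : (∃ u w : ↥(G.neighborSet v), ι u = i ∧ ι w = j ∧ G.Adj ↑u ↑w ∧ cV ↑u ↑w = true) ↔
          (∃ u w : ↥(G.neighborSet v), ι u = j ∧ ι w = i ∧ G.Adj ↑u ↑w ∧ cV ↑u ↑w = true) := by
        constructor <;> rintro ⟨u, w, h1, h2, h3, h4⟩ <;>
          exact ⟨w, u, h2, h1, h3.symm, by rw [cV_symm]; exact h4⟩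
      have hiff2 : (∃ u w : ↥(G.neighborSet v), ι u = i ∧ ι w = j ∧ G.Adj ↑u ↑w) ↔
          (∃ u w : ↥(G.neighborSet v), ι u = j ∧ ι w = i ∧ G.Adj ↑u ↑w) := by
        constructor <;> rintro ⟨u, w, h1, h2, h3⟩ <;> exact ⟨w, u, h2, h1, h3.symm⟩
      exact if_congr hiff1 rfl (if_congr hiff2 rfl rfl)
    · intro u w hadj
      simp only []
      by_cases hcv : cV ↑u ↑w = true
      · rw [if_pos ⟨u, w, rfl, rfl, hadj, hcv⟩, hcv]
        rfl
      · have hcv' : cV ↑u ↑w = false := by simpa using hcv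
        have hnex : ¬(∃ u' w' : ↥(G.neighborSet v),
            ι u' = ι u ∧ ι w' = ι w ∧ G.Adj ↑u' ↑w' ∧ cV ↑u' ↑w' = true) := by
          rintro ⟨u', w', hu', hw', hadj', hcv2⟩
          rw [hι hu', hι hw'] at hcv2
          exact hcv hcv2
        rw [if_neg hnex, if_pos ⟨u, w, rfl, rfl, hadj⟩, hcv']
        rfl
    · intro i j h0
      simp only [] at h0
      by_cases h1 : (∃ u w : ↥(G.neighborSet v), ι u = i ∧ ι w = j ∧ G.Adj ↑u ↑w ∧ cV ↑u ↑w = true)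
      · obtain ⟨u, w, hu, hw, hadj, -⟩ := h1
        exact ⟨u, w, hu, hw, hadj⟩
      · rw [if_neg h1] at h0
        by_cases h2 : (∃ u w : ↥(G.neighborSet v), ι u = i ∧ ι w = j ∧ G.Adj ↑u ↑w)
        · exact h2
        · rw [if_neg h2] at h0
          exact absurd rfl h0
  -- no monochromatic triangle avoiding v
  have noMono : ∀ x y z : ↥({v}ᶜ : Set V), (x : V) ≠ y → (x : V) ≠ z → (y : V) ≠ z →
      G.Adj ↑x ↑y → G.Adj ↑x ↑z → G.Adj ↑y ↑z →
      c₀ s(x, y) = c₀ s(x, z) → c₀ s(x, z) = c₀ s(y, z) → False := by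
    intro x y z hxy hxz hyz haxy haxz hayz h1 h2
    have hxy' : x ≠ y := fun h => hxy (congrArg _ h)
    have hxz' : x ≠ z := fun h => hxz (congrArg _ h)
    have hyz' : y ≠ z := fun h => hyz (congrArg _ h)
    have hmono : IsMonoNClique (G.induce ({v}ᶜ : Set V)) c₀ (c₀ s(x, y)) 3 {x, y, z} := by
      constructor
      · rw [SimpleGraph.is3Clique_triple_iff]
        exact ⟨haxy, haxz, hayz⟩
      · intro a ha b hb hab
        simp only [Finset.mem_insert, Finset.mem_singleton] at ha hb
        have exy : c₀ s(y, x) = c₀ s(x, y) := by rw [Sym2.eq_swap]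
        have exz : c₀ s(z, x) = c₀ s(x, z) := by rw [Sym2.eq_swap]
        have eyz : c₀ s(z, y) = c₀ s(y, z) := by rw [Sym2.eq_swap]
        rcases ha with rfl | rfl | rfl <;> rcases hb with rfl | rfl | rfl <;>
          first
            | exact absurd rfl hab
            | rfl
            | exact h1.symm
            | exact (h1.trans h2).symm
            | rw [exy]
            | (rw [exz]; exact h1.symm)
            | (rw [eyz]; exact (h1.trans h2).symm)
    rcases Bool.eq_false_or_eq_true (c₀ s(x, y)) with hb | hb
    · exact hc₀.1 ⟨_, hb ▸ hmono⟩
    · exact hc₀.2 ⟨_, hb ▸ hmono⟩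
  have vmem : ∀ u : ↥(G.neighborSet v), (u : V) ∈ ({v}ᶜ : Set V) :=
    fun u => Set.mem_compl_singleton_iff.mpr (hNv u)
  -- triangle-freeness hypothesis for the key lemma
  have tf5 : ∀ i j k : Fin 5, i ≠ j → i ≠ k → j ≠ k →
      ¬(e2 i j ≠ 0 ∧ e2 i j = e2 i k ∧ e2 i k = e2 j k) := by
    rintro i j k hij hik hjk ⟨hne0, heq1, heq2⟩
    obtain ⟨u, w, hu, hw, huw⟩ := he2_val i j hne0
    obtain ⟨u', x, hu', hx, hux⟩ := he2_val i k (by rw [← heq1]; exact hne0)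
    obtain ⟨w', x', hw', hx', hwx⟩ := he2_val j k (by rw [← heq2, ← heq1]; exact hne0)
    rw [hι (hu'.trans hu.symm)] at hux
    rw [hι (hw'.trans hw.symm)] at hwx
    rw [hι (hx'.trans hx.symm)] at hwx
    rw [← hu, ← hw, ← hx] at heq1 heq2
    rw [he2_adj u w huw, he2_adj u x hux] at heq1
    rw [he2_adj u x hux, he2_adj w x hwx] at heq2
    have condinj : ∀ a b : Bool, cond a (1 : Fin 3) 2 = cond b 1 2 → a = b := by decide
    have hc1 : cV ↑u ↑w = cV ↑u ↑x := condinj _ _ heq1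
    have hc2 : cV ↑u ↑x = cV ↑w ↑x := condinj _ _ heq2
    refine noMono ⟨↑u, vmem u⟩ ⟨↑w, vmem w⟩ ⟨↑x, vmem x⟩ (G.ne_of_adj huw) (G.ne_of_adj hux)
      (G.ne_of_adj hwx) huw hux hwx ?_ ?_
    · rw [← cV_eq ⟨↑u, vmem u⟩ ⟨↑w, vmem w⟩, ← cV_eq ⟨↑u, vmem u⟩ ⟨↑x, vmem x⟩]
      exact hc1
    · rw [← cV_eq ⟨↑u, vmem u⟩ ⟨↑x, vmem x⟩, ← cV_eq ⟨↑w, vmem w⟩ ⟨↑x, vmem x⟩]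
      exact hc2
  rcases Stmt17Aux.key5P e2 he2_symm tf5 with ⟨f5, huniq⟩ | hcomp
  · -- there is a splitting with at most one monochromatic pair
    obtain ⟨c1, hc1v, hc1o⟩ :
        ∃ c1 : Sym2 V → Bool, (∀ u : ↥(G.neighborSet v), c1 s(v, ↑u) = f5 (ι u)) ∧
          (∀ a b : V, a ≠ v → b ≠ v → c1 s(a, b) = cV a b) := by
      refine ⟨Sym2.lift ⟨fun a b =>
        if a = v then (if hb : b ∈ G.neighborSet v then f5 (ι ⟨b, hb⟩) else true)
        else if b = v then (if ha : a ∈ G.neighborSet v then f5 (ι ⟨a, ha⟩) else true)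
        else cV a b, ?_⟩, ?_, ?_⟩
      · intro a b
        by_cases ha : a = v <;> by_cases hb : b = v
        · rw [ha, hb]
        · simp [ha, hb]
        · simp [ha, hb]
        · simp only [if_neg ha, if_neg hb]
          exact cV_symm a b
      · intro u
        rw [Sym2.lift_mk]
        simp only [eq_self_iff_true, if_true, dif_pos u.2, Subtype.coe_eta]
      · intro a b ha hb
        rw [Sym2.lift_mk]
        simp only [if_neg ha, if_neg hb]
    -- analysis of monochromatic triangles
    have analysis : ∀ (col : Bool) (t : Finset V), IsMonoNClique G c1 col 3 t →
        ∃ u w : ↥(G.neighborSet v), t = {v, ↑u, ↑w} ∧ Stmt17Aux.Mono5 e2 f5 (ι u) (ι w) := by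
      rintro col t ⟨hcl, hmono⟩
      obtain ⟨x, y, z, hxy, hxz, hyz, ht⟩ := Finset.card_eq_three.mp hcl.card_eq
      subst ht
      have hAdj : ∀ a ∈ ({x, y, z} : Finset V), ∀ b ∈ ({x, y, z} : Finset V), a ≠ b → G.Adj a b :=
        fun a ha b hb hab => hcl.1 ha hb hab
      by_cases hvt : v ∈ ({x, y, z} : Finset V)
      · have key : ∀ p q : V, ({x, y, z} : Finset V) = {v, p, q} → v ≠ p → v ≠ q → p ≠ q →
            ∃ u w : ↥(G.neighborSet v), ({x, y, z} : Finset V) = {v, ↑u, ↑w} ∧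
              Stmt17Aux.Mono5 e2 f5 (ι u) (ι w) := by
          intro p q htpq hvp hvq hpq
          have hvm : v ∈ ({x, y, z} : Finset V) := by rw [htpq]; simp
          have hpm : p ∈ ({x, y, z} : Finset V) := by rw [htpq]; simp
          have hqm : q ∈ ({x, y, z} : Finset V) := by rw [htpq]; simp
          have hap : G.Adj v p := hAdj v hvm p hpm hvp
          have haq : G.Adj v q := hAdj v hvm q hqm hvq
          have hapq : G.Adj p q := hAdj p hpm q hqm hpq
          have hfp : f5 (ι ⟨p, hap⟩) = col := by
            rw [← hc1v ⟨p, hap⟩]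
            exact hmono v hvm p hpm hvp
          have hfq : f5 (ι ⟨q, haq⟩) = col := by
            rw [← hc1v ⟨q, haq⟩]
            exact hmono v hvm q hqm hvq
          have hcpq : cV p q = col := by
            rw [← hc1o p q (Ne.symm hvp) (Ne.symm hvq)]
            exact hmono p hpm q hqm hpq
          refine ⟨⟨p, hap⟩, ⟨q, haq⟩, htpq, ?_, ?_, ?_⟩
          · intro h
            exact hpq (congrArg Subtype.val (hι h))
          · rw [hfp, hfq]
          · rw [he2_adj _ _ hapq, hcpq, hfp]
        have hvxyz : v = x ∨ v = y ∨ v = z := by simpa using hvt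
        rcases hvxyz with rfl | rfl | rfl
        · exact key y z rfl hxy hxz hyz
        · exact key x z (Finset.insert_comm x v {z}) (Ne.symm hxy) hyz hxz
        · exact key x y (by rw [Finset.pair_comm y v, Finset.insert_comm x v {y}])
            (Ne.symm hxz) (Ne.symm hyz) hxy
      · exfalso
        have hx' : x ≠ v := fun h => hvt (by rw [← h]; simp)
        have hy' : y ≠ v := fun h => hvt (by rw [← h]; simp)
        have hz' : z ≠ v := fun h => hvt (by rw [← h]; simp)
        have m1 : c1 s(x, y) = col := hmono x (by simp) y (by simp) hxy
        have m2 : c1 s(x, z) = col := hmono x (by simp) z (by simp) hxz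
        have m3 : c1 s(y, z) = col := hmono y (by simp) z (by simp) hyz
        have haxy : G.Adj x y := hAdj x (by simp) y (by simp) hxy
        have haxz : G.Adj x z := hAdj x (by simp) z (by simp) hxz
        have hayz : G.Adj y z := hAdj y (by simp) z (by simp) hyz
        refine noMono ⟨x, Set.mem_compl_singleton_iff.mpr hx'⟩
          ⟨y, Set.mem_compl_singleton_iff.mpr hy'⟩ ⟨z, Set.mem_compl_singleton_iff.mpr hz'⟩
          hxy hxz hyz haxy haxz hayz ?_ ?_
        · rw [← cV_eq, ← cV_eq, ← hc1o x y hx' hy', ← hc1o x z hx' hz']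
          rw [m1, m2]
        · rw [← cV_eq, ← cV_eq, ← hc1o x z hx' hz', ← hc1o y z hy' hz']
          rw [m2, m3]
    -- the set of monochromatic triangles is a singleton
    have hexist : ∃ t col, IsMonoNClique G c1 col 3 t := by
      by_contra hcon
      push_neg at hcon
      exact hG c1 ⟨fun ⟨t, ht⟩ => hcon t true ht, fun ⟨t, ht⟩ => hcon t false ht⟩
    obtain ⟨t₀, col₀, ht₀⟩ := hexist
    have hSet : {t : Finset V | ∃ col, IsMonoNClique G c1 col 3 t} = {t₀} := by
      ext t
      simp only [Set.mem_setOf_eq, Set.mem_singleton_iff]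
      constructor
      · rintro ⟨col, ht⟩
        obtain ⟨u, w, htv, hm⟩ := analysis col t ht
        obtain ⟨u0, w0, htv0, hm0⟩ := analysis col₀ t₀ ht₀
        have hs := huniq _ _ _ _ hm hm0
        rw [Sym2.eq_iff] at hs
        rcases hs with ⟨h1, h2⟩ | ⟨h1, h2⟩
        · rw [htv, htv0, hι h1, hι h2]
        · rw [htv, htv0, hι h1, hι h2, Finset.pair_comm]
      · rintro rfl
        exact ⟨col₀, ht₀⟩
    exact hfinal ⟨c1, by rw [hSet]; exact Set.ncard_singleton t₀⟩
  · -- complete case : G contains K₆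
    exfalso
    have hsurj : ∀ k : Fin 5, ∃ u : ↥(G.neighborSet v), ι u = k := by
      intro k
      obtain ⟨j, hj⟩ := exists_ne k
      obtain ⟨u, w, hu, -, -⟩ := he2_val k j (hcomp k j (Ne.symm hj))
      exact ⟨u, hu⟩
    have hcard5 : Fintype.card ↥(G.neighborSet v) = 5 := by
      have hb : Function.Bijective ι := ⟨hι, fun k => hsurj k⟩
      have := Fintype.card_of_bijective hb
      simpa using this
    have hadjN : ∀ u w : ↥(G.neighborSet v), u ≠ w → G.Adj ↑u ↑w := by
      intro u w huw
      have h0 := hcomp (ι u) (ι w) (fun h => huw (hι h))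
      obtain ⟨u', w', hu', hw', hadj⟩ := he2_val _ _ h0
      obtain rfl : u' = u := hι hu'
      obtain rfl : w' = w := hι hw'
      exact hadj
    have hvN : v ∉ G.neighborSet v := fun h => G.irrefl h
    have hcard6 : Fintype.card ↥(insert v (G.neighborSet v) : Set V) = 6 := by
      rw [← Nat.card_eq_fintype_card, Nat.card_coe_set_eq,
        Set.ncard_insert_of_notMem hvN (Set.toFinite _)]
      rw [← Nat.card_coe_set_eq, Nat.card_eq_fintype_card, hcard5]
    have hle6 : (⊤ : SimpleGraph ↥(insert v (G.neighborSet v) : Set V)) ≤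
        G.induce (insert v (G.neighborSet v) : Set V) := by
      intro a b hab
      have hab' : (a : V) ≠ b := fun h => hab.ne (Subtype.ext h)
      show G.Adj ↑a ↑b
      rcases Set.mem_insert_iff.mp a.2 with ha | ha <;>
        rcases Set.mem_insert_iff.mp b.2 with hb | hb
      · exact absurd (ha.trans hb.symm) hab'
      · rw [ha]; exact hb
      · rw [hb]; exact (show G.Adj v ↑a from ha).symm
      · exact hadjN ⟨↑a, ha⟩ ⟨↑b, hb⟩ (fun h => hab' (congrArg (fun z : ↥(G.neighborSet v) => (z : V)) h))
    have harr : Arrows (⊤ : SimpleGraph ↥(insert v (G.neighborSet v) : Set V)) 3 3 :=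
      Stmt17Aux.arrows_top_card6 hcard6
    by_cases hcase : (insert v (G.neighborSet v) : Set V) = Set.univ ∧
        (⊤ : SimpleGraph ↥(insert v (G.neighborSet v) : Set V)) =
          G.induce (insert v (G.neighborSet v) : Set V)
    · obtain ⟨huniv, htop⟩ := hcase
      apply hK6
      have hV6 : Fintype.card V = 6 := by
        have h1 : Nat.card ↥(insert v (G.neighborSet v) : Set V) = 6 := by
          rw [Nat.card_eq_fintype_card]; exact hcard6
        rw [huniv] at h1
        have h2 := Nat.card_congr (Equiv.Set.univ V)
        rw [← Nat.card_eq_fintype_card]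
        omega
      have hGtop : ∀ a b : V, a ≠ b → G.Adj a b := by
        intro a b hab
        have ha : a ∈ (insert v (G.neighborSet v) : Set V) := by rw [huniv]; trivial
        have hb : b ∈ (insert v (G.neighborSet v) : Set V) := by rw [huniv]; trivial
        have h : (⊤ : SimpleGraph ↥(insert v (G.neighborSet v) : Set V)).Adj ⟨a, ha⟩ ⟨b, hb⟩ := by
          simp only [SimpleGraph.top_adj]
          exact fun h => hab (congrArg Subtype.val h)
        rw [htop] at h
        exact h
      refine ⟨⟨Fintype.equivFinOfCardEq hV6, ?_⟩⟩
      intro a b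
      simp only [SimpleGraph.top_adj]
      constructor
      · intro h
        exact hGtop a b (fun hh => h (by rw [hh]))
      · intro h hh
        exact G.ne_of_adj h ((Fintype.equivFinOfCardEq hV6).injective hh)
    · exact hMin _ _ hle6 (not_and_or.mp hcase) harr
end

section
/- Let G be a minimal (3, 3)-Ramsey graph with clique number ω(G) ≤ 4. Then the minimum degree of G satisfies δ(G) ≥ 5. -/
open SimpleGraph

set_option maxHeartbeats 4000000 in
set_option synthInstance.maxHeartbeats 1000000 in
set_option synthInstance.maxSize 2000 in
theorem key12 : ∀ (e01 e02 e03 e12 e13 e23 c01 c02 c03 c12 c13 c23 : Bool),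
    ¬(e01 = true ∧ e02 = true ∧ e03 = true ∧ e12 = true ∧ e13 = true ∧ e23 = true) →
    (e01 = true → e02 = true → e12 = true → ¬(c01 = c02 ∧ c02 = c12)) →
    (e01 = true → e03 = true → e13 = true → ¬(c01 = c03 ∧ c03 = c13)) →
    (e02 = true → e03 = true → e23 = true → ¬(c02 = c03 ∧ c03 = c23)) →
    (e12 = true → e13 = true → e23 = true → ¬(c12 = c13 ∧ c13 = c23)) →
    ∃ f0 f1 f2 f3 : Bool,
      (e01 = true → ¬(f0 = f1 ∧ c01 = f0)) ∧
      (e02 = true → ¬(f0 = f2 ∧ c02 = f0)) ∧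
      (e03 = true → ¬(f0 = f3 ∧ c03 = f0)) ∧
      (e12 = true → ¬(f1 = f2 ∧ c12 = f1)) ∧
      (e13 = true → ¬(f1 = f3 ∧ c13 = f1)) ∧
      (e23 = true → ¬(f2 = f3 ∧ c23 = f2)) := by decide

theorem key4 (adj col : Fin 4 → Fin 4 → Bool)
    (hsym : ∀ i j, adj i j = adj j i) (hirr : ∀ i, adj i i = false)
    (hcsym : ∀ i j, col i j = col j i)
    (hK : ¬ ∀ i j, i ≠ j → adj i j = true)
    (htri : ∀ i j k, adj i j = true → adj i k = true → adj j k = true →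
        ¬(col i j = col i k ∧ col i k = col j k)) :
    ∃ f : Fin 4 → Bool, ∀ i j, adj i j = true → ¬(f i = f j ∧ col i j = f i) := by
  obtain ⟨f0, f1, f2, f3, h01, h02, h03, h12, h13, h23⟩ :=
    key12 (adj 0 1) (adj 0 2) (adj 0 3) (adj 1 2) (adj 1 3) (adj 2 3)
      (col 0 1) (col 0 2) (col 0 3) (col 1 2) (col 1 3) (col 2 3)
      (by
        rintro ⟨a01, a02, a03, a12, a13, a23⟩
        apply hK
        intro i j hne
        fin_cases i <;> fin_cases j <;>
          first
            | exact absurd rfl hne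
            | assumption
            | (rw [hsym]; assumption))
      (htri 0 1 2) (htri 0 1 3) (htri 0 2 3) (htri 1 2 3)
  have rev : ∀ (i j : Fin 4) (a b : Bool),
      (adj i j = true → ¬(a = b ∧ col i j = a)) →
      (adj j i = true → ¬(b = a ∧ col j i = b)) := by
    intro i j a b h ha hc
    exact h (by rw [hsym]; exact ha) ⟨hc.1.symm, (hcsym i j).trans (hc.2.trans hc.1)⟩
  refine ⟨fun i => match i with | 0 => f0 | 1 => f1 | 2 => f2 | 3 => f3, ?_⟩
  intro i j hadj hcon
  fin_cases i <;> fin_cases j <;>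
    first
      | exact absurd hadj (by rw [hirr]; simp)
      | exact h01 hadj hcon
      | exact h02 hadj hcon
      | exact h03 hadj hcon
      | exact h12 hadj hcon
      | exact h13 hadj hcon
      | exact h23 hadj hcon
      | exact rev _ _ _ _ h01 hadj hcon
      | exact rev _ _ _ _ h02 hadj hcon
      | exact rev _ _ _ _ h03 hadj hcon
      | exact rev _ _ _ _ h12 hadj hcon
      | exact rev _ _ _ _ h13 hadj hcon
      | exact rev _ _ _ _ h23 hadj hcon
/-- If `G` is a minimal `(3, 3)`-Ramsey graph with clique number `ω(G) ≤ 4`, then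
`δ(G) ≥ 5`. -/
theorem stmt_18 {V : Type} [Fintype V] (G : SimpleGraph V) (hmin : MinimalArrows G 3 3)
    (hω : G.cliqueNum ≤ 4) :
    5 ≤ minDeg G := by
  classical
  by_contra hlt
  push_neg at hlt
  have hV : Nonempty V := by
    by_contra hne
    rw [not_nonempty_iff] at hne
    refine hmin.1 (fun _ => true) ⟨?_, ?_⟩ <;>
      · rintro ⟨t, ⟨⟨-, hcard⟩, -⟩⟩
        rw [Finset.eq_empty_of_isEmpty t] at hcard
        simp at hcard
  haveI := hV
  obtain ⟨v, hv⟩ := Nat.sInf_mem (Set.range_nonempty (deg G))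
  have hvdeg : (G.neighborSet v).ncard ≤ 4 := by
    have h5 : deg G v < 5 := by rw [hv]; exact hlt
    exact Nat.lt_succ_iff.mp h5
  set s : Set V := {v}ᶜ with hsdef
  have hvns : v ∉ s := by simp [hsdef]
  have hsne : s ≠ Set.univ := by
    intro h; exact hvns (h ▸ Set.mem_univ v)
  have hnarr := hmin.2 s (G.induce s) le_rfl (Or.inl hsne)
  rw [Arrows] at hnarr
  push_neg at hnarr
  obtain ⟨c, hc⟩ := hnarr
  set N : Set V := G.neighborSet v with hNdef
  have hNs : ∀ a, a ∈ N → a ∈ s := by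
    intro a ha
    have hadj : G.Adj v a := ha
    rw [hsdef]
    exact Set.mem_compl_singleton_iff.mpr (fun h => G.irrefl (h ▸ hadj))
  have hNfin : N.Finite := Set.toFinite N
  set l : List V := hNfin.toFinset.toList with hldef
  have hlen : l.length ≤ 4 := by
    rw [hldef, Finset.length_toList, ← Set.ncard_eq_toFinset_card]
    exact hvdeg
  set e : Fin 4 → V := fun i => l.getD i v with hedef
  have hcover : ∀ a, a ∈ N → ∃ i : Fin 4, e i = a := by
    intro a ha
    have hal : a ∈ l := by rw [hldef, Finset.mem_toList]; exact hNfin.mem_toFinset.mpr ha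
    obtain ⟨n, hn, hget⟩ := List.mem_iff_getElem.mp hal
    refine ⟨⟨n, lt_of_lt_of_le hn hlen⟩, ?_⟩
    rw [hedef]
    simp only []
    rw [List.getD_eq_getElem l v hn]
    exact hget
  set adj : Fin 4 → Fin 4 → Bool :=
    fun i j => decide (e i ∈ N ∧ e j ∈ N ∧ G.Adj (e i) (e j)) with hadjdef
  have hadjt : ∀ i j, adj i j = true ↔ (e i ∈ N ∧ e j ∈ N ∧ G.Adj (e i) (e j)) := by
    intro i j; rw [hadjdef]; exact decide_eq_true_iff
  set col : Fin 4 → Fin 4 → Bool :=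
    fun i j => if h : e i ∈ s ∧ e j ∈ s then c s(⟨e i, h.1⟩, ⟨e j, h.2⟩) else true with hcoldef
  have hcol_eq : ∀ (i j : Fin 4) (hi : e i ∈ s) (hj : e j ∈ s),
      col i j = c s(⟨e i, hi⟩, ⟨e j, hj⟩) := by
    intro i j hi hj
    rw [hcoldef]
    exact dif_pos ⟨hi, hj⟩
  have hsymadj : ∀ i j, adj i j = adj j i := by
    intro i j
    rw [hadjdef]
    simp only [decide_eq_decide]
    constructor
    · rintro ⟨h1, h2, h3⟩; exact ⟨h2, h1, h3.symm⟩
    · rintro ⟨h1, h2, h3⟩; exact ⟨h2, h1, h3.symm⟩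
  have hirr : ∀ i, adj i i = false := by
    intro i
    rw [hadjdef]
    simp only [decide_eq_false_iff_not]
    rintro ⟨-, -, h⟩
    exact G.irrefl h
  have hcsym : ∀ i j, col i j = col j i := by
    intro i j
    by_cases hi : e i ∈ s ∧ e j ∈ s
    · rw [hcol_eq i j hi.1 hi.2, hcol_eq j i hi.2 hi.1, Sym2.eq_swap]
    · simp only [hcoldef]
      rw [dif_neg hi, dif_neg (fun h => hi ⟨h.2, h.1⟩)]
  have hK : ¬ ∀ i j : Fin 4, i ≠ j → adj i j = true := by
    intro hall
    have hall' : ∀ i j : Fin 4, i ≠ j → e i ∈ N ∧ e j ∈ N ∧ G.Adj (e i) (e j) :=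
      fun i j h => (hadjt i j).mp (hall i j h)
    have hmem : ∀ i : Fin 4, e i ∈ N := by
      intro i
      fin_cases i
      · exact (hall' 0 1 (by decide)).1
      · exact (hall' 1 0 (by decide)).1
      · exact (hall' 2 0 (by decide)).1
      · exact (hall' 3 0 (by decide)).1
    have hEadj : ∀ i j : Fin 4, i ≠ j → G.Adj (e i) (e j) := fun i j h => (hall' i j h).2.2
    have hvadj : ∀ i : Fin 4, G.Adj v (e i) := by
      intro i
      have := hmem i
      rw [hNdef] at this
      exact this
    have hvne : ∀ i : Fin 4, v ≠ e i := fun i => (hvadj i).ne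
    have hene : ∀ i j : Fin 4, i ≠ j → e i ≠ e j := fun i j h => (hEadj i j h).ne
    have hclq5 : G.IsClique (↑({v, e 0, e 1, e 2, e 3} : Finset V)) := by
      intro x hx y hy hxy
      simp only [Finset.coe_insert, Set.mem_insert_iff, Finset.coe_singleton,
        Set.mem_singleton_iff] at hx hy
      rcases hx with rfl | rfl | rfl | rfl | rfl <;> rcases hy with rfl | rfl | rfl | rfl | rfl <;>
        first
          | exact absurd rfl hxy
          | exact hvadj _
          | exact (hvadj _).symm
          | exact hEadj _ _ (by decide)
    have h0 : v ∉ ({e 0, e 1, e 2, e 3} : Finset V) := by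
      simp only [Finset.mem_insert, Finset.mem_singleton]
      push_neg
      exact ⟨hvne 0, hvne 1, hvne 2, hvne 3⟩
    have h1 : e 0 ∉ ({e 1, e 2, e 3} : Finset V) := by
      simp only [Finset.mem_insert, Finset.mem_singleton]
      push_neg
      exact ⟨hene 0 1 (by decide), hene 0 2 (by decide), hene 0 3 (by decide)⟩
    have h2 : e 1 ∉ ({e 2, e 3} : Finset V) := by
      simp only [Finset.mem_insert, Finset.mem_singleton]
      push_neg
      exact ⟨hene 1 2 (by decide), hene 1 3 (by decide)⟩
    have h3 : e 2 ∉ ({e 3} : Finset V) := by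
      simp only [Finset.mem_singleton]
      exact hene 2 3 (by decide)
    have hcard5 : ({v, e 0, e 1, e 2, e 3} : Finset V).card = 5 := by
      rw [Finset.card_insert_of_notMem h0, Finset.card_insert_of_notMem h1,
        Finset.card_insert_of_notMem h2, Finset.card_insert_of_notMem h3,
        Finset.card_singleton]
    have h5 : 5 ≤ G.cliqueNum := by
      have := @SimpleGraph.IsClique.card_le_cliqueNum V G _ ({v, e 0, e 1, e 2, e 3} : Finset V) hclq5
      rw [hcard5] at this
      exact this
    omega
  have htri : ∀ i j k : Fin 4, adj i j = true → adj i k = true → adj j k = true →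
      ¬(col i j = col i k ∧ col i k = col j k) := by
    intro i j k hij hik hjk hcols
    obtain ⟨hiN, hjN, hija⟩ := (hadjt i j).mp hij
    obtain ⟨-, hkN, hika⟩ := (hadjt i k).mp hik
    obtain ⟨-, -, hjka⟩ := (hadjt j k).mp hjk
    have his : e i ∈ s := hNs _ hiN
    have hjs : e j ∈ s := hNs _ hjN
    have hks : e k ∈ s := hNs _ hkN
    have hclq : (G.induce s).IsNClique 3 ({⟨e i, his⟩, ⟨e j, hjs⟩, ⟨e k, hks⟩} : Finset ↥s) := by
      constructor
      · intro x hx y hy hxy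
        simp only [Finset.coe_insert, Set.mem_insert_iff, Finset.coe_singleton,
          Set.mem_singleton_iff] at hx hy
        rcases hx with rfl | rfl | rfl <;> rcases hy with rfl | rfl | rfl <;>
          first
            | exact absurd rfl hxy
            | exact hija
            | exact hija.symm
            | exact hika
            | exact hika.symm
            | exact hjka
            | exact hjka.symm
      · rw [Finset.card_insert_of_notMem, Finset.card_insert_of_notMem,
          Finset.card_singleton]
        · simp only [Finset.mem_singleton]
          exact fun h => hjka.ne (congrArg Subtype.val h)
        · simp only [Finset.mem_insert, Finset.mem_singleton]
          push_neg
          exact ⟨fun h => hija.ne (congrArg Subtype.val h),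
            fun h => hika.ne (congrArg Subtype.val h)⟩
    have hmono : ∀ u ∈ ({⟨e i, his⟩, ⟨e j, hjs⟩, ⟨e k, hks⟩} : Finset ↥s),
        ∀ w ∈ ({⟨e i, his⟩, ⟨e j, hjs⟩, ⟨e k, hks⟩} : Finset ↥s), u ≠ w →
          c s(u, w) = col i j := by
      intro u hu w hw huw
      simp only [Finset.mem_insert, Finset.mem_singleton] at hu hw
      have e1 : c s((⟨e i, his⟩ : ↥s), (⟨e j, hjs⟩ : ↥s)) = col i j := (hcol_eq i j his hjs).symm
      have e2 : c s((⟨e i, his⟩ : ↥s), (⟨e k, hks⟩ : ↥s)) = col i j := by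
        rw [hcols.1]; exact (hcol_eq i k his hks).symm
      have e3 : c s((⟨e j, hjs⟩ : ↥s), (⟨e k, hks⟩ : ↥s)) = col i j := by
        rw [hcols.1, hcols.2]; exact (hcol_eq j k hjs hks).symm
      rcases hu with rfl | rfl | rfl <;> rcases hw with rfl | rfl | rfl <;>
        first
          | exact absurd rfl huw
          | exact e1
          | exact e2
          | exact e3
          | (rw [Sym2.eq_swap]; first | exact e1 | exact e2 | exact e3)
    rcases Bool.eq_false_or_eq_true (col i j) with hx | hx
    · exact hc.1 ⟨_, hclq, fun u hu w hw huw => (hmono u hu w hw huw).trans hx⟩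
    · exact hc.2 ⟨_, hclq, fun u hu w hw huw => (hmono u hu w hw huw).trans hx⟩
  obtain ⟨f, hf⟩ := key4 adj col hsymadj hirr hcsym hK htri
  set F : V → Bool := fun a => if h : ∃ i : Fin 4, e i = a then f h.choose else true with hFdef
  have hFspec : ∀ (a : V) (h : ∃ i : Fin 4, e i = a), F a = f h.choose := by
    intro a h; rw [hFdef]; exact dif_pos h
  set g : V → V → Bool := fun a b =>
    if a = v then F b else if b = v then F a
    else if h : a ∈ s ∧ b ∈ s then c s(⟨a, h.1⟩, ⟨b, h.2⟩) else true with hgdef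
  have hgv : ∀ b, g v b = F b := by intro b; rw [hgdef]; simp
  have hg_eq : ∀ a b, a ≠ v → b ≠ v → ∀ (has : a ∈ s) (hbs : b ∈ s),
      g a b = c s(⟨a, has⟩, ⟨b, hbs⟩) := by
    intro a b ha hb has hbs
    rw [hgdef]
    simp only [if_neg ha, if_neg hb]
    exact dif_pos ⟨has, hbs⟩
  have hgsym : ∀ a b, g a b = g b a := by
    intro a b
    by_cases ha : a = v
    · by_cases hb : b = v
      · simp [hgdef, ha, hb]
      · simp [hgdef, ha, hb]
    · by_cases hb : b = v
      · simp [hgdef, ha, hb]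
      · have has : a ∈ s := Set.mem_compl_singleton_iff.mpr ha
        have hbs : b ∈ s := Set.mem_compl_singleton_iff.mpr hb
        rw [hg_eq a b ha hb has hbs, hg_eq b a hb ha hbs has, Sym2.eq_swap]
  set c'' : Sym2 V → Bool := Sym2.lift ⟨g, hgsym⟩ with hc''def
  have hc''mk : ∀ a b, c'' s(a, b) = g a b := by
    intro a b; rw [hc''def]; exact Sym2.lift_mk _ _ _
  have main : ∀ (x : Bool) (t : Finset V), ¬ IsMonoNClique G c'' x 3 t := by
    rintro x t ⟨⟨hclq, hcard⟩, hmono⟩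
    by_cases hvt : v ∈ t
    · have h2 : (t.erase v).card = 2 := by rw [Finset.card_erase_of_mem hvt, hcard]
      obtain ⟨a, b, hab, hers⟩ := Finset.card_eq_two.mp h2
      have haine : a ∈ t.erase v := hers.symm ▸ Finset.mem_insert_self a {b}
      have hbine : b ∈ t.erase v :=
        hers.symm ▸ Finset.mem_insert_of_mem (Finset.mem_singleton_self b)
      have hat : a ∈ t := Finset.mem_of_mem_erase haine
      have hbt : b ∈ t := Finset.mem_of_mem_erase hbine
      have hav : a ≠ v := Finset.ne_of_mem_erase haine
      have hbv : b ≠ v := Finset.ne_of_mem_erase hbine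
      have hVa : G.Adj v a := hclq (Finset.mem_coe.mpr hvt) (Finset.mem_coe.mpr hat) (Ne.symm hav)
      have hVb : G.Adj v b := hclq (Finset.mem_coe.mpr hvt) (Finset.mem_coe.mpr hbt) (Ne.symm hbv)
      have hAab : G.Adj a b := hclq (Finset.mem_coe.mpr hat) (Finset.mem_coe.mpr hbt) hab
      have haN : a ∈ N := by rw [hNdef]; exact hVa
      have hbN : b ∈ N := by rw [hNdef]; exact hVb
      have hFa : F a = x := by
        have h := hmono v hvt a hat (Ne.symm hav)
        rwa [hc''mk, hgv] at h
      have hFb : F b = x := by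
        have h := hmono v hvt b hbt (Ne.symm hbv)
        rwa [hc''mk, hgv] at h
      have has : a ∈ s := hNs _ haN
      have hbs : b ∈ s := hNs _ hbN
      have hcab : c s((⟨a, has⟩ : ↥s), (⟨b, hbs⟩ : ↥s)) = x := by
        have h := hmono a hat b hbt hab
        rwa [hc''mk, hg_eq a b hav hbv has hbs] at h
      have hexa : ∃ i : Fin 4, e i = a := hcover a haN
      have hexb : ∃ i : Fin 4, e i = b := hcover b hbN
      have heia := hexa.choose_spec
      have heib := hexb.choose_spec
      refine hf hexa.choose hexb.choose ?_ ⟨?_, ?_⟩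
      · rw [hadjt]
        refine ⟨?_, ?_, ?_⟩
        · rw [heia]; exact haN
        · rw [heib]; exact hbN
        · rw [heia, heib]; exact hAab
      · rw [← hFspec a hexa, ← hFspec b hexb, hFa, hFb]
      · have hie : e hexa.choose ∈ s := by rw [heia]; exact has
        have hje : e hexb.choose ∈ s := by rw [heib]; exact hbs
        rw [hcol_eq _ _ hie hje, ← hFspec a hexa, hFa]
        have hq1 : (⟨e hexa.choose, hie⟩ : ↥s) = ⟨a, has⟩ := Subtype.ext heia
        have hq2 : (⟨e hexb.choose, hje⟩ : ↥s) = ⟨b, hbs⟩ := Subtype.ext heib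
        rw [hq1, hq2]
        exact hcab
    · have hts : ∀ a ∈ t, a ∈ s := by
        intro a ha
        rw [hsdef]
        exact Set.mem_compl_singleton_iff.mpr (fun h => hvt (h ▸ ha))
      set t' : Finset ↥s := t.subtype (fun a => a ∈ s) with ht'def
      have hmem' : ∀ u : ↥s, u ∈ t' ↔ ↑u ∈ t := by
        intro u; rw [ht'def]; exact Finset.mem_subtype
      have hcard' : t'.card = 3 := by
        rw [ht'def, Finset.card_subtype, Finset.filter_true_of_mem hts, hcard]
      have hclq' : (G.induce s).IsNClique 3 t' := by
        constructor
        · intro u hu w hw huw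
          exact hclq (Finset.mem_coe.mpr ((hmem' u).mp (Finset.mem_coe.mp hu)))
            (Finset.mem_coe.mpr ((hmem' w).mp (Finset.mem_coe.mp hw)))
            (fun hh => huw (Subtype.ext hh))
        · exact hcard'
      have hmono' : ∀ u ∈ t', ∀ w ∈ t', u ≠ w → c s(u, w) = x := by
        intro u hu w hw huw
        have hune : (↑u : V) ≠ v := Set.mem_compl_singleton_iff.mp u.2
        have hwne : (↑w : V) ≠ v := Set.mem_compl_singleton_iff.mp w.2
        have h1 := hmono ↑u ((hmem' u).mp hu) ↑w ((hmem' w).mp hw) (fun hh => huw (Subtype.ext hh))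
        rw [hc''mk, hg_eq ↑u ↑w hune hwne u.2 w.2] at h1
        exact h1
      cases x
      · exact hc.2 ⟨t', hclq', hmono'⟩
      · exact hc.1 ⟨t', hclq', hmono'⟩
  exact hmin.1 c'' ⟨fun ⟨t, ht⟩ => main true t ht, fun ⟨t, ht⟩ => main false t ht⟩
end
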